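/- arXiv:1310.6179 — 6 statements merged into one kernel-verified Lean document; each statement's English description precedes it below -/
import Mathlib

section
/- Let s ∈ [0,2), M, R > 0, and y ∈ C^∞([t₁,t₂]) with |y^(i)(t)| ≤ M (i!)^s/R^i. Then there exist constants C, R₁, R₂ > 0 such that the function θ(t,x) = Σ_{i≥0} x^(2i)/(2i)! y^(i)(t) satisfies |∂_t^m ∂_x^n θ(t,x)| ≤ C · (m!)^s / R₁^m · (n!)^(s/2) / R₂^n for all m, n ≥ 0 and (t,x) ∈ [t₁,t₂] × [0,1]. -/
open Real Filter Set Topology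

namespace FlatGevrey


noncomputable def ee (n i : ℕ) : ℝ :=
  if n ≤ 2*i then (((2*i - n).factorial : ℝ))⁻¹ else 0

lemma ee_nonneg (n i : ℕ) : 0 ≤ ee n i := by
  unfold ee; split
  · positivity
  · exact le_refl 0

noncomputable def co (n i : ℕ) (x : ℝ) : ℝ :=
  if n ≤ 2*i then x ^ (2*i - n) / ((2*i - n).factorial : ℝ) else 0

lemma co_hasDerivAt (n i : ℕ) (x : ℝ) :
    HasDerivAt (fun w => co n i w) (co (n+1) i x) x := by
  unfold co
  by_cases h : n ≤ 2*i
  · simp only [if_pos h]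
    have hp : HasDerivAt (fun w : ℝ => w ^ (2*i-n) / ((2*i-n).factorial : ℝ))
        (((2*i-n) : ℕ) * x ^ (2*i-n-1) / ((2*i-n).factorial : ℝ)) x :=
      (hasDerivAt_pow _ x).div_const _
    convert hp using 1
    by_cases h1 : n + 1 ≤ 2*i
    · rw [if_pos h1]
      have hk : 2*i - n = (2*i - (n+1)) + 1 := by omega
      have hk2 : 2*i - n - 1 = 2*i - (n+1) := by omega
      rw [hk2, hk, Nat.factorial_succ]
      generalize (2*i - (n+1)) = k
      have hf : ((k.factorial : ℝ)) ≠ 0 := by positivity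
      have hk1 : ((k:ℝ) + 1) ≠ 0 := by positivity
      push_cast
      field_simp
    · rw [if_neg h1]
      have h0 : 2*i - n = 0 := by omega
      rw [h0]
      simp
  · simp only [if_neg h, if_neg (by omega : ¬ n + 1 ≤ 2*i)]
    exact hasDerivAt_const x 0

lemma co_abs_le (n i : ℕ) {x : ℝ} (hx : |x| ≤ 2) :
    |co n i x| ≤ 4 ^ i * ee n i := by
  unfold co ee
  by_cases h : n ≤ 2*i
  · simp only [if_pos h]
    rw [abs_div, abs_pow, Nat.abs_cast]
    have h2 : |x| ^ (2*i-n) ≤ (2:ℝ) ^ (2*i-n) := pow_le_pow_left₀ (abs_nonneg x) hx _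
    have h3 : (2:ℝ) ^ (2*i-n) ≤ 2 ^ (2*i) := pow_le_pow_right₀ one_le_two (by omega)
    have h4 : (2:ℝ) ^ (2*i) = 4 ^ i := by rw [pow_mul]; norm_num
    calc |x| ^ (2*i-n) / (((2*i - n).factorial : ℕ) : ℝ)
        ≤ (4:ℝ)^i / (((2*i - n).factorial : ℕ) : ℝ) := by
          gcongr
          exact h2.trans (h3.trans_eq h4)
      _ = 4 ^ i * ((((2*i - n).factorial : ℕ) : ℝ))⁻¹ := div_eq_mul_inv _ _
  · simp [if_neg h]

lemma co_abs_le_one (n i : ℕ) {x : ℝ} (hx : |x| ≤ 1) :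
    |co n i x| ≤ ee n i := by
  unfold co ee
  by_cases h : n ≤ 2*i
  · simp only [if_pos h]
    rw [abs_div, abs_pow, Nat.abs_cast]
    have h2 : |x| ^ (2*i - n) ≤ 1 := pow_le_one₀ (abs_nonneg x) hx
    calc |x| ^ (2*i-n) / ((2*i - n).factorial : ℝ)
        ≤ 1 / ((2*i - n).factorial : ℝ) := by gcongr
      _ = (((2*i - n).factorial : ℝ))⁻¹ := one_div _
  · simp [if_neg h]



lemma eqOn_iterate_deriv {S : Set ℝ} (hS : IsOpen S) {f g : ℝ → ℝ}
    (h : Set.EqOn f g S) (m : ℕ) : Set.EqOn (deriv^[m] f) (deriv^[m] g) S := by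
  induction m with
  | zero => exact h
  | succ m ih =>
    intro z hz
    rw [Function.iterate_succ_apply', Function.iterate_succ_apply']
    exact Filter.EventuallyEq.deriv_eq (Filter.eventuallyEq_of_mem (hS.mem_nhds hz) ih)

lemma iter_deriv_tsum_open {S : Set ℝ} (hS : IsOpen S) (hSc : IsPreconnected S)
    {z₀ : ℝ} (hz₀ : z₀ ∈ S) (D : ℕ → ℕ → ℝ → ℝ) (u : ℕ → ℕ → ℝ)
    (hD : ∀ k i, ∀ z ∈ S, HasDerivAt (D k i) (D (k+1) i z) z)
    (hu : ∀ k i, ∀ z ∈ S, |D k i z| ≤ u k i)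
    (hsum : ∀ k, Summable (u k)) (k : ℕ) :
    ∀ z ∈ S, deriv^[k] (fun w => ∑' i, D 0 i w) z = ∑' i, D k i z := by
  induction k with
  | zero => intro z _; rfl
  | succ k ih =>
    intro z hz
    rw [Function.iterate_succ_apply']
    have h1 : deriv^[k] (fun w => ∑' i, D 0 i w) =ᶠ[nhds z] (fun w => ∑' i, D k i w) :=
      Filter.eventuallyEq_of_mem (hS.mem_nhds hz) ih
    rw [h1.deriv_eq]
    have h2 : HasDerivAt (fun w => ∑' i, D k i w) (∑' i, D (k+1) i z) z := by
      refine hasDerivAt_tsum_of_isPreconnected (hsum (k+1)) hS hSc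
        (fun i w hw => hD k i w hw)
        (fun i w hw => by rw [Real.norm_eq_abs]; exact hu (k+1) i w hw) hz₀ ?_ hz
      exact Summable.of_norm_bounded (hsum k)
        (fun i => by rw [Real.norm_eq_abs]; exact hu k i z₀ hz₀)
    exact h2.deriv

lemma abs_deriv_le_of_boundary {a b : ℝ} (hab : a < b) {h G : ℝ → ℝ} {B : ℝ} (hB : 0 ≤ B)
    (hG : ∀ u ∈ Set.Ioo a b, HasDerivAt h (G u) u)
    (hGb : ∀ u ∈ Set.Ioo a b, |G u| ≤ B) :
    ∀ t ∈ Set.Icc a b, |deriv h t| ≤ B := by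
  intro t ht
  by_cases hmem : t ∈ Set.Ioo a b
  · rw [(hG t hmem).deriv]; exact hGb t hmem
  by_cases hdiff : DifferentiableAt ℝ h t
  swap
  · rw [deriv_zero_of_not_differentiableAt hdiff]; simpa using hB
  have hta : t = a ∨ t = b := by
    rcases eq_or_lt_of_le ht.1 with h1 | h1
    · exact Or.inl h1.symm
    rcases eq_or_lt_of_le ht.2 with h2 | h2
    · exact Or.inr h2
    exact absurd ⟨h1, h2⟩ hmem
  have hclo : t ∈ closure (Set.Ioo a b) := by
    rw [closure_Ioo hab.ne]; exact ht
  have hne : (𝓝[Set.Ioo a b] t).NeBot := mem_closure_iff_nhdsWithin_neBot.mp hclo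
  have hsub : Set.Ioo a b ⊆ {w : ℝ | w ≠ t} := fun w hw he => hmem (he ▸ hw)
  have hslope : Tendsto (slope h t) (𝓝[Set.Ioo a b] t) (𝓝 (deriv h t)) :=
    (hasDerivAt_iff_tendsto_slope.mp hdiff.hasDerivAt).mono_left (nhdsWithin_mono t hsub)
  refine le_of_tendsto hslope.abs ?_
  filter_upwards [self_mem_nhdsWithin] with u hu
  rcases hta with rfl | rfl
  · -- t = a ; MVT on [a, u]
    have hau : t < u := hu.1
    have hcont : ContinuousOn h (Set.Icc t u) := by
      intro w hw
      rcases eq_or_lt_of_le hw.1 with hw1 | hw1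
      · rw [← hw1]; exact hdiff.continuousAt.continuousWithinAt
      · exact ((hG w ⟨hw1, lt_of_le_of_lt hw.2 hu.2⟩).differentiableAt.continuousAt).continuousWithinAt
    obtain ⟨c, hc, hceq⟩ := exists_hasDerivAt_eq_slope h G hau hcont
      (fun w hw => hG w ⟨hw.1, lt_of_lt_of_le hw.2 hu.2.le⟩)
    have : slope h t u = G c := by
      rw [slope_def_field, hceq]
    rw [this]
    exact hGb c ⟨hc.1, hc.2.trans hu.2⟩
  · -- t = b ; MVT on [u, b]
    have hub : u < t := hu.2
    have hcont : ContinuousOn h (Set.Icc u t) := by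
      intro w hw
      rcases eq_or_lt_of_le hw.2 with hw2 | hw2
      · rw [hw2]; exact hdiff.continuousAt.continuousWithinAt
      · exact ((hG w ⟨lt_of_lt_of_le hu.1 hw.1, hw2⟩).differentiableAt.continuousAt).continuousWithinAt
    obtain ⟨c, hc, hceq⟩ := exists_hasDerivAt_eq_slope h G hub hcont
      (fun w hw => hG w ⟨lt_of_le_of_lt hu.1.le hw.1, hw.2⟩)
    have : slope h t u = G c := by
      rw [slope_def_field, hceq]
      rw [← neg_sub (h t) (h u), ← neg_sub t u, neg_div_neg_eq]
    rw [this]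
    exact hGb c ⟨hu.1.trans hc.1, hc.2⟩

lemma rpow_pow_comm {x : ℝ} (hx : 0 ≤ x) (k : ℕ) (r : ℝ) :
    ((x ^ k : ℝ)) ^ r = (x ^ r) ^ k := by
  rw [← Real.rpow_natCast x k, ← Real.rpow_mul hx, mul_comm, Real.rpow_mul hx, Real.rpow_natCast]

lemma two_pow_rpow (i : ℕ) (s : ℝ) : ((2:ℝ) ^ (2*i)) ^ (s/2) = ((2:ℝ) ^ s) ^ i := by
  rw [pow_mul, rpow_pow_comm (by positivity)]
  congr 1
  rw [← Real.rpow_natCast (2:ℝ) 2, ← Real.rpow_mul (by norm_num)]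
  congr 1
  push_cast
  ring

lemma summable_geom_fact (q : ℝ) (hq : 1 ≤ q) {ε : ℝ} (hε : ε < 0) :
    Summable (fun j : ℕ => q ^ j * ((j.factorial : ℝ)) ^ ε) := by
  have hq0 : 0 < q := lt_of_lt_of_le one_pos hq
  have hpos : ∀ j : ℕ, 0 < q ^ j * ((j.factorial : ℝ)) ^ ε := fun j => by positivity
  apply summable_of_ratio_test_tendsto_lt_one (l := 0) one_pos
    (Filter.Eventually.of_forall fun j => (hpos j).ne')
  have heq : ∀ j : ℕ, ‖q ^ (j+1) * (((j+1).factorial : ℝ)) ^ ε‖ / ‖q ^ j * ((j.factorial : ℝ)) ^ ε‖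
      = q * ((j:ℝ) + 1) ^ ε := by
    intro j
    rw [Real.norm_eq_abs, Real.norm_eq_abs, abs_of_pos (hpos _), abs_of_pos (hpos j)]
    rw [Nat.factorial_succ]
    push_cast
    rw [Real.mul_rpow (by positivity) (by positivity), pow_succ]
    have h1 : (0:ℝ) < ((j.factorial : ℝ)) ^ ε := by positivity
    have h2 : (0:ℝ) < q ^ j := by positivity
    field_simp
  have htend : Tendsto (fun j : ℕ => q * ((j:ℝ) + 1) ^ ε) atTop (𝓝 0) := by
    have h1 : Tendsto (fun x : ℝ => x ^ ε) atTop (𝓝 0) := by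
      have := tendsto_rpow_neg_atTop (y := -ε) (by linarith)
      simpa using this
    have h2 : Tendsto (fun j : ℕ => (j:ℝ) + 1) atTop atTop :=
      tendsto_atTop_add_const_right _ 1 tendsto_natCast_atTop_atTop
    have h3 := (h1.comp h2).const_mul q
    simpa using h3
  exact Tendsto.congr (fun j => (heq j).symm) htend

lemma fact_sq_le (i : ℕ) : i.factorial * i.factorial ≤ (2*i).factorial :=
  Nat.le_of_dvd (Nat.factorial_pos _)
    (by simpa [two_mul] using Nat.factorial_mul_factorial_dvd_factorial_add i i)

lemma choose_le_two_pow (n k : ℕ) : n.choose k ≤ 2 ^ n := by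
  by_cases h : k ≤ n
  · calc n.choose k ≤ ∑ m ∈ Finset.range (n+1), n.choose m :=
        Finset.single_le_sum (fun m _ => Nat.zero_le _) (Finset.mem_range.mpr (Nat.lt_succ_of_le h))
    _ = 2 ^ n := Nat.sum_range_choose n
  · rw [Nat.choose_eq_zero_of_lt (lt_of_not_ge h)]; exact Nat.zero_le _

lemma fact_le_two_pow_mul (n m : ℕ) (h : n ≤ m) :
    m.factorial ≤ 2 ^ m * (n.factorial * (m - n).factorial) := by
  calc m.factorial = m.choose n * n.factorial * (m-n).factorial :=
        (Nat.choose_mul_factorial_mul_factorial h).symm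
    _ ≤ 2^m * n.factorial * (m-n).factorial := by
        exact Nat.mul_le_mul_right _ (Nat.mul_le_mul_right _ (choose_le_two_pow m n))
    _ = 2^m * (n.factorial * (m-n).factorial) := by ring

lemma sig_bound (s : ℝ) (hs0 : 0 ≤ s) (hs2 : s < 2) (a : ℝ) (ha : 0 < a) :
    ∃ q A : ℝ, 1 ≤ q ∧ 0 ≤ A ∧ ∀ n : ℕ,
      Summable (fun i : ℕ => a ^ i * ((i.factorial : ℝ)) ^ s * ee n i) ∧
      ∑' i : ℕ, a ^ i * ((i.factorial : ℝ)) ^ s * ee n i ≤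
        ((n.factorial : ℝ)) ^ (s/2) * (2*q) ^ n * (1 + A) := by
  set τ : ℝ := (2:ℝ) ^ s with hτdef
  have hτpos : (0:ℝ) < τ := Real.rpow_pos_of_pos two_pos s
  set q : ℝ := max (a * τ) 1 with hqdef
  have hq1 : (1:ℝ) ≤ q := le_max_right _ _
  have hq0 : (0:ℝ) < q := lt_of_lt_of_le one_pos hq1
  have hε : s/2 - 1 < 0 := by linarith
  have hAsum : Summable (fun j : ℕ => q ^ j * ((j.factorial : ℝ)) ^ (s/2-1)) :=
    summable_geom_fact q hq1 hε
  set A : ℝ := ∑' j : ℕ, q ^ j * ((j.factorial : ℝ)) ^ (s/2-1) with hAdef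
  have hA0 : 0 ≤ A := tsum_nonneg (fun j => by positivity)
  refine ⟨q, A, hq1, hA0, fun n => ?_⟩
  set g : ℕ → ℝ := fun i => q ^ i * (((i - n).factorial : ℝ)) ^ (s/2-1) with hgdef
  have hg0 : ∀ i, 0 ≤ g i := fun i => by positivity
  have hgshift : (fun i => g (i + n)) = fun i => q ^ n * (q ^ i * ((i.factorial : ℝ)) ^ (s/2-1)) := by
    funext i
    simp only [hgdef, Nat.add_sub_cancel, pow_add]
    ring
  have hgsum : Summable g := by
    rw [← summable_nat_add_iff n, hgshift]
    exact hAsum.mul_left _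
  have hpt : ∀ i, a ^ i * ((i.factorial : ℝ)) ^ s * ee n i ≤ ((n.factorial : ℝ)) ^ (s/2) * g i := by
    intro i
    by_cases h : n ≤ 2*i
    · have hfpos : (0:ℝ) < (((2*i - n).factorial : ℝ)) := by positivity
      have hipos : (0:ℝ) < ((i.factorial : ℝ)) := by positivity
      have step1 : ((i.factorial : ℝ)) ^ s
          ≤ τ ^ i * ((n.factorial : ℝ)) ^ (s/2) * (((2*i-n).factorial : ℝ)) ^ (s/2) := by
        have hnat : i.factorial * i.factorial ≤ 2 ^ (2*i) * (n.factorial * (2*i - n).factorial) :=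
          (fact_sq_le i).trans (fact_le_two_pow_mul n (2*i) h)
        have hcast : ((i.factorial : ℝ)) * ((i.factorial : ℝ))
            ≤ (2:ℝ) ^ (2*i) * (((n.factorial : ℝ)) * (((2*i-n).factorial : ℝ))) := by
          exact_mod_cast hnat
        have hr := Real.rpow_le_rpow (by positivity) hcast (by linarith : 0 ≤ s/2)
        calc ((i.factorial : ℝ)) ^ s
            = (((i.factorial : ℝ)) * ((i.factorial : ℝ))) ^ (s/2) := by
              rw [Real.mul_rpow hipos.le hipos.le, ← Real.rpow_add hipos]
              ring_nf
          _ ≤ ((2:ℝ) ^ (2*i) * (((n.factorial : ℝ)) * (((2*i-n).factorial : ℝ)))) ^ (s/2) := hr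
          _ = τ ^ i * ((n.factorial : ℝ)) ^ (s/2) * (((2*i-n).factorial : ℝ)) ^ (s/2) := by
              rw [Real.mul_rpow (by positivity) (by positivity),
                Real.mul_rpow (by positivity) (by positivity), two_pow_rpow, ← mul_assoc]
      have step2 : (((2*i-n).factorial : ℝ)) ^ (s/2) * ee n i
          = (((2*i-n).factorial : ℝ)) ^ (s/2-1) := by
        unfold ee
        rw [if_pos h, Real.rpow_sub hfpos, Real.rpow_one]
        ring
      have step3 : (((2*i-n).factorial : ℝ)) ^ (s/2-1) ≤ (((i-n).factorial : ℝ)) ^ (s/2-1) := by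
        apply Real.rpow_le_rpow_of_nonpos (by positivity) ?_ hε.le
        exact_mod_cast Nat.factorial_le (by omega : i - n ≤ 2*i - n)
      have hco : (a * τ) ^ i ≤ q ^ i :=
        pow_le_pow_left₀ (by positivity) (le_max_left _ _) i
      calc a ^ i * ((i.factorial : ℝ)) ^ s * ee n i
          ≤ a ^ i * (τ ^ i * ((n.factorial : ℝ)) ^ (s/2) * (((2*i-n).factorial : ℝ)) ^ (s/2)) * ee n i := by
            have := ee_nonneg n i
            gcongr
        _ = ((n.factorial : ℝ)) ^ (s/2) * ((a*τ) ^ i * ((((2*i-n).factorial : ℝ)) ^ (s/2) * ee n i)) := by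
            rw [mul_pow]; ring
        _ = ((n.factorial : ℝ)) ^ (s/2) * ((a*τ) ^ i * (((2*i-n).factorial : ℝ)) ^ (s/2-1)) := by
            rw [step2]
        _ ≤ ((n.factorial : ℝ)) ^ (s/2) * (q ^ i * (((i-n).factorial : ℝ)) ^ (s/2-1)) := by
            have h1 : (0:ℝ) ≤ (((2*i-n).factorial : ℝ)) ^ (s/2-1) := by positivity
            gcongr
        _ = ((n.factorial : ℝ)) ^ (s/2) * g i := rfl
    · have h0 : ee n i = 0 := by unfold ee; rw [if_neg h]
      rw [h0, mul_zero]
      positivity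
  have hsum : Summable (fun i : ℕ => a ^ i * ((i.factorial : ℝ)) ^ s * ee n i) :=
    Summable.of_nonneg_of_le
      (fun i => mul_nonneg (by positivity) (ee_nonneg n i)) hpt (hgsum.mul_left _)
  refine ⟨hsum, ?_⟩
  -- bound the tail sum of g
  have htail : ∑' i, g (i + n) = q ^ n * A := by
    rw [hgshift]
    exact tsum_mul_left
  have hhead : (∑ i ∈ Finset.range n, g i) ≤ (n:ℝ) * q ^ n := by
    have hterm : ∀ i ∈ Finset.range n, g i ≤ q ^ n := by
      intro i hi
      have hilt : i < n := Finset.mem_range.mp hi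
      have hin : i - n = 0 := by omega
      have : g i = q ^ i := by
        simp only [hgdef, hin, Nat.factorial_zero, Nat.cast_one, Real.one_rpow, mul_one]
      rw [this]
      exact pow_le_pow_right₀ hq1 hilt.le
    calc (∑ i ∈ Finset.range n, g i) ≤ ∑ _i ∈ Finset.range n, q ^ n :=
          Finset.sum_le_sum hterm
      _ = (n:ℝ) * q ^ n := by
          rw [Finset.sum_const, Finset.card_range, nsmul_eq_mul]
  have hgsum_le : ∑' i, g i ≤ (2*q) ^ n * (1 + A) := by
    have hsplit : (∑ i ∈ Finset.range n, g i) + ∑' i, g (i + n) = ∑' i, g i :=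
      hgsum.sum_add_tsum_nat_add n
    have h2n : (n:ℝ) ≤ 2 ^ n := by exact_mod_cast (Nat.lt_two_pow_self (n := n)).le
    have h2n1 : (1:ℝ) ≤ 2 ^ n := one_le_pow₀ one_le_two
    have hqn : (0:ℝ) < q ^ n := by positivity
    have : ∑' i, g i ≤ (n:ℝ) * q ^ n + q ^ n * A := by
      rw [← hsplit, htail]
      exact add_le_add_left hhead _
    calc ∑' i, g i ≤ (n:ℝ) * q ^ n + q ^ n * A := this
      _ ≤ 2 ^ n * q ^ n * (1 + A) := by
          have e1 : (n:ℝ) * q ^ n ≤ 2 ^ n * q ^ n := mul_le_mul_of_nonneg_right h2n hqn.le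
          have e2 : q ^ n * A ≤ 2 ^ n * q ^ n * A :=
            mul_le_mul_of_nonneg_right (le_mul_of_one_le_left hqn.le h2n1) hA0
          nlinarith [e1, e2]
      _ = (2*q) ^ n * (1 + A) := by rw [mul_pow]
  calc (∑' i, a ^ i * ((i.factorial : ℝ)) ^ s * ee n i)
      ≤ ∑' i, ((n.factorial : ℝ)) ^ (s/2) * g i := Summable.tsum_le_tsum hpt hsum (hgsum.mul_left _)
    _ = ((n.factorial : ℝ)) ^ (s/2) * ∑' i, g i := tsum_mul_left
    _ ≤ ((n.factorial : ℝ)) ^ (s/2) * ((2*q) ^ n * (1 + A)) := by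
        have : (0:ℝ) ≤ ((n.factorial : ℝ)) ^ (s/2) := by positivity
        exact mul_le_mul_of_nonneg_left hgsum_le this
    _ = ((n.factorial : ℝ)) ^ (s/2) * (2*q) ^ n * (1 + A) := by ring


end FlatGevrey

open FlatGevrey Filter Set Topology

theorem flat_series_gevrey_estimates
    (s : ℝ) (hs : s ∈ Set.Ico (0 : ℝ) 2) (M R : ℝ) (hM : 0 < M) (hR : 0 < R)
    (t₁ t₂ : ℝ) (ht : t₁ < t₂) (y : ℝ → ℝ) (hy : ContDiff ℝ (⊤ : ℕ∞) y)
    (hbound : ∀ i : ℕ, ∀ t ∈ Set.Icc t₁ t₂,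
      |iteratedDeriv i y t| ≤ M * (Nat.factorial i : ℝ) ^ s / R ^ i)
    (θ : ℝ → ℝ → ℝ)
    (hθ : ∀ t x, θ t x =
      ∑' i : ℕ, x ^ (2 * i) / (Nat.factorial (2 * i) : ℝ) * iteratedDeriv i y t) :
    ∃ C R₁ R₂ : ℝ, 0 < C ∧ 0 < R₁ ∧ 0 < R₂ ∧
      ∀ m n : ℕ, ∀ t ∈ Set.Icc t₁ t₂, ∀ x ∈ Set.Icc (0 : ℝ) 1,
        |iteratedDeriv m (fun t' => iteratedDeriv n (fun x' => θ t' x') x) t| ≤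
          C * ((Nat.factorial m : ℝ) ^ s / R₁ ^ m)
            * ((Nat.factorial n : ℝ) ^ (s / 2) / R₂ ^ n) := by
  obtain ⟨hs0, hs2⟩ := hs
  set τ : ℝ := (2:ℝ) ^ s with hτdef
  have hτpos : (0:ℝ) < τ := Real.rpow_pos_of_pos two_pos s
  have hYd : ∀ k (t0 : ℝ), HasDerivAt (iteratedDeriv k y) (iteratedDeriv (k+1) y t0) t0 := by
    intro k t0
    have hdiff : Differentiable ℝ (iteratedDeriv k y) :=
      hy.differentiable_iteratedDeriv k (by exact_mod_cast ENat.coe_lt_top k)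
    have h1 := (hdiff t0).hasDerivAt
    rw [iteratedDeriv_succ]
    exact h1
  obtain ⟨q₁, A₁, hq₁, hA₁, hSIG₁⟩ := FlatGevrey.sig_bound s hs0 hs2 (4/R) (by positivity)
  obtain ⟨q₂, A₂, hq₂, hA₂, hSIG₂⟩ := FlatGevrey.sig_bound s hs0 hs2 (τ/R) (by positivity)
  -- Stage 1 : x-derivatives of θ t at interior points
  have key1 : ∀ t ∈ Set.Icc t₁ t₂, ∀ x ∈ Set.Ioo (-2:ℝ) 2, ∀ n : ℕ,
      iteratedDeriv n (fun x' => θ t x') x = ∑' i, co n i x * iteratedDeriv i y t := by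
    intro t htmem x hx n
    have hbnd : ∀ k i, ∀ z ∈ Set.Ioo (-2:ℝ) 2,
        |co k i z * iteratedDeriv i y t| ≤ M * ((4/R) ^ i * ((i.factorial : ℝ)) ^ s * ee k i) := by
      intro k i z hz
      have hz2 : |z| ≤ 2 := (abs_lt.mpr ⟨hz.1, hz.2⟩).le
      have h1 : |co k i z| ≤ 4 ^ i * ee k i := co_abs_le k i hz2
      have h2 : |iteratedDeriv i y t| ≤ M * ((i.factorial : ℝ)) ^ s / R ^ i := hbound i t htmem
      calc |co k i z * iteratedDeriv i y t| = |co k i z| * |iteratedDeriv i y t| := abs_mul _ _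
        _ ≤ (4 ^ i * ee k i) * (M * ((i.factorial : ℝ)) ^ s / R ^ i) := by
            apply mul_le_mul h1 h2 (abs_nonneg _)
              (mul_nonneg (by positivity) (ee_nonneg k i))
        _ = M * ((4/R) ^ i * ((i.factorial : ℝ)) ^ s * ee k i) := by
            rw [div_pow]
            field_simp
    have hmain := iter_deriv_tsum_open isOpen_Ioo
      ((convex_Ioo (-2:ℝ) 2).isPreconnected) (show (0:ℝ) ∈ Set.Ioo (-2:ℝ) 2 by norm_num)
      (fun k i w => co k i w * iteratedDeriv i y t)
      (fun k i => M * ((4/R) ^ i * ((i.factorial : ℝ)) ^ s * ee k i))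
      (fun k i z _ => (co_hasDerivAt k i z).mul_const _)
      hbnd (fun k => ((hSIG₁ k).1).mul_left M) n x hx
    have hfun : (fun w => ∑' i, co 0 i w * iteratedDeriv i y t) = (fun x' => θ t x') := by
      funext w
      rw [hθ t w]
      congr 1
    rw [iteratedDeriv_eq_iterate, ← hfun]
    exact hmain
  refine ⟨M * (1 + A₂), R / τ, 1 / (2*q₂), by positivity, by positivity, by positivity, ?_⟩
  intro m n t htmem x hx
  have hx2 : x ∈ Set.Ioo (-2:ℝ) 2 := ⟨by linarith [hx.1], by linarith [hx.2]⟩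
  have hx1 : |x| ≤ 1 := abs_le.mpr ⟨by linarith [hx.1], hx.2⟩
  have hmid : (t₁+t₂)/2 ∈ Set.Ioo t₁ t₂ := by constructor <;> linarith
  set g : ℝ → ℝ := fun t' => iteratedDeriv n (fun x' => θ t' x') x with hgdef
  set F : ℝ → ℝ := fun t' => ∑' i, co n i x * iteratedDeriv i y t' with hFdef
  have hgF : Set.EqOn g F (Set.Icc t₁ t₂) := fun t' ht' => key1 t' ht' x hx2 n
  set Sn : ℝ := ∑' i, (τ/R) ^ i * ((i.factorial : ℝ)) ^ s * ee n i with hSndef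
  have hSn0 : 0 ≤ Sn :=
    tsum_nonneg (fun i => mul_nonneg (by positivity) (ee_nonneg n i))
  -- uniform bounds on the termwise t-derivatives
  have hu2 : ∀ k i, ∀ t' ∈ Set.Icc t₁ t₂, |co n i x * iteratedDeriv (i+k) y t'|
      ≤ (M * ((k.factorial : ℝ)) ^ s * (τ/R) ^ k)
        * ((τ/R) ^ i * ((i.factorial : ℝ)) ^ s * ee n i) := by
    intro k i t' ht'
    have h1 : |co n i x| ≤ ee n i := co_abs_le_one n i hx1
    have h2 : |iteratedDeriv (i+k) y t'| ≤ M * (((i+k).factorial : ℝ)) ^ s / R ^ (i+k) :=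
      hbound (i+k) t' ht'
    have hkey : M * (((i+k).factorial : ℝ)) ^ s / R ^ (i+k)
        ≤ M * (((k.factorial : ℝ)) ^ s * (τ/R) ^ k * ((τ/R) ^ i * ((i.factorial : ℝ)) ^ s)) := by
      have hnat : (i+k).factorial ≤ 2 ^ (i+k) * (i.factorial * k.factorial) := by
        have := fact_le_two_pow_mul i (i+k) (Nat.le_add_right i k)
        simpa [Nat.add_sub_cancel_left] using this
      have hcast : (((i+k).factorial : ℝ)) ≤ (2:ℝ) ^ (i+k) * (((i.factorial : ℝ)) * ((k.factorial : ℝ))) := by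
        exact_mod_cast hnat
      have hr : (((i+k).factorial : ℝ)) ^ s
          ≤ ((2:ℝ) ^ (i+k) * (((i.factorial : ℝ)) * ((k.factorial : ℝ)))) ^ s :=
        Real.rpow_le_rpow (by positivity) hcast hs0
      have hexp : ((2:ℝ) ^ (i+k) * (((i.factorial : ℝ)) * ((k.factorial : ℝ)))) ^ s
          = τ ^ (i+k) * ((i.factorial : ℝ)) ^ s * ((k.factorial : ℝ)) ^ s := by
        rw [Real.mul_rpow (by positivity) (by positivity),
          Real.mul_rpow (by positivity) (by positivity),
          FlatGevrey.rpow_pow_comm (by norm_num : (0:ℝ) ≤ 2), ← mul_assoc]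
      have h3 : (((i+k).factorial : ℝ)) ^ s ≤ τ ^ (i+k) * ((i.factorial : ℝ)) ^ s * ((k.factorial : ℝ)) ^ s :=
        hr.trans_eq hexp
      have hRpow : (0:ℝ) < R ^ (i+k) := by positivity
      calc M * (((i+k).factorial : ℝ)) ^ s / R ^ (i+k)
          ≤ M * (τ ^ (i+k) * ((i.factorial : ℝ)) ^ s * ((k.factorial : ℝ)) ^ s) / R ^ (i+k) := by
            gcongr
        _ = M * (((k.factorial : ℝ)) ^ s * (τ/R) ^ k * ((τ/R) ^ i * ((i.factorial : ℝ)) ^ s)) := by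
            rw [div_pow, div_pow, pow_add]
            field_simp
            ring
    calc |co n i x * iteratedDeriv (i+k) y t'|
        = |co n i x| * |iteratedDeriv (i+k) y t'| := abs_mul _ _
      _ ≤ ee n i * (M * (((i+k).factorial : ℝ)) ^ s / R ^ (i+k)) :=
          mul_le_mul h1 h2 (abs_nonneg _) (ee_nonneg n i)
      _ ≤ ee n i * (M * (((k.factorial : ℝ)) ^ s * (τ/R) ^ k * ((τ/R) ^ i * ((i.factorial : ℝ)) ^ s))) :=
          mul_le_mul_of_nonneg_left hkey (ee_nonneg n i)
      _ = (M * ((k.factorial : ℝ)) ^ s * (τ/R) ^ k)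
          * ((τ/R) ^ i * ((i.factorial : ℝ)) ^ s * ee n i) := by ring
  have hsum2 : ∀ k, Summable (fun i => (M * ((k.factorial : ℝ)) ^ s * (τ/R) ^ k)
      * ((τ/R) ^ i * ((i.factorial : ℝ)) ^ s * ee n i)) :=
    fun k => ((hSIG₂ n).1).mul_left _
  have habs : ∀ k, ∀ t' ∈ Set.Icc t₁ t₂,
      |∑' i, co n i x * iteratedDeriv (i+k) y t'|
        ≤ (M * ((k.factorial : ℝ)) ^ s * (τ/R) ^ k) * Sn := by
    intro k t' ht'
    have hsabs : Summable (fun i => ‖co n i x * iteratedDeriv (i+k) y t'‖) := by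
      apply Summable.of_nonneg_of_le (fun i => norm_nonneg _) ?_ (hsum2 k)
      intro i
      rw [Real.norm_eq_abs]
      exact hu2 k i t' ht'
    calc |∑' i, co n i x * iteratedDeriv (i+k) y t'|
        ≤ ∑' i, |co n i x * iteratedDeriv (i+k) y t'| := by
          have := norm_tsum_le_tsum_norm hsabs
          simpa only [Real.norm_eq_abs] using this
      _ ≤ ∑' i, (M * ((k.factorial : ℝ)) ^ s * (τ/R) ^ k)
            * ((τ/R) ^ i * ((i.factorial : ℝ)) ^ s * ee n i) := by
          apply Summable.tsum_le_tsum (fun i => hu2 k i t' ht') ?_ (hsum2 k)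
          simpa only [Real.norm_eq_abs] using hsabs
      _ = (M * ((k.factorial : ℝ)) ^ s * (τ/R) ^ k) * Sn := tsum_mul_left
  have stage2 := iter_deriv_tsum_open isOpen_Ioo (convex_Ioo t₁ t₂).isPreconnected hmid
    (fun k i t' => co n i x * iteratedDeriv (i+k) y t')
    (fun k i => (M * ((k.factorial : ℝ)) ^ s * (τ/R) ^ k)
      * ((τ/R) ^ i * ((i.factorial : ℝ)) ^ s * ee n i))
    (fun k i t' _ => (hYd (i+k) t').const_mul _)
    (fun k i t' ht' => hu2 k i t' (Set.Ioo_subset_Icc_self ht')) hsum2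
  have hBnd : ∀ t' ∈ Set.Icc t₁ t₂,
      |deriv^[m] g t'| ≤ (M * ((m.factorial : ℝ)) ^ s * (τ/R) ^ m) * Sn := by
    cases m with
    | zero =>
      intro t' ht'
      have h0 := habs 0 t' ht'
      simp only [Function.iterate_zero_apply]
      rw [hgF ht']
      exact h0
    | succ m' =>
      have hBB0 : 0 ≤ (M * (((m'+1).factorial : ℝ)) ^ s * (τ/R) ^ (m'+1)) * Sn :=
        mul_nonneg (by positivity) hSn0
      have hmain := abs_deriv_le_of_boundary ht hBB0
        (h := deriv^[m'] g)
        (G := fun u => ∑' i, co n i x * iteratedDeriv (i+(m'+1)) y u) ?_ ?_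
      · intro t' ht'
        rw [Function.iterate_succ_apply']
        exact hmain t' ht'
      · -- HasDerivAt
        intro u hu
        have hHD : HasDerivAt (fun t' => ∑' i, co n i x * iteratedDeriv (i+m') y t')
            (∑' i, co n i x * iteratedDeriv (i+(m'+1)) y u) u := by
          refine hasDerivAt_tsum_of_isPreconnected (hsum2 (m'+1)) isOpen_Ioo
            (convex_Ioo t₁ t₂).isPreconnected
            (fun i t' _ => (hYd (i+m') t').const_mul _)
            (fun i t' ht' => ?_) hmid ?_ hu
          · rw [Real.norm_eq_abs]
            exact hu2 (m'+1) i t' (Set.Ioo_subset_Icc_self ht')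
          · apply Summable.of_norm_bounded (hsum2 m')
            intro i
            rw [Real.norm_eq_abs]
            exact hu2 m' i _ (Set.Ioo_subset_Icc_self hmid)
        have heq : deriv^[m'] g =ᶠ[𝓝 u]
            (fun t' => ∑' i, co n i x * iteratedDeriv (i+m') y t') := by
          apply Filter.eventuallyEq_of_mem (isOpen_Ioo.mem_nhds hu)
          intro w hw
          have e1 := eqOn_iterate_deriv isOpen_Ioo (hgF.mono Set.Ioo_subset_Icc_self) m' hw
          have e2 := stage2 m' w hw
          exact e1.trans e2
        exact hHD.congr_of_eventuallyEq heq
      · exact fun u hu => habs (m'+1) u (Set.Ioo_subset_Icc_self hu)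
  -- final numeric bound
  have hb1 := hBnd t htmem
  have hb2 := (hSIG₂ n).2
  rw [iteratedDeriv_eq_iterate]
  have hq₂0 : (0:ℝ) < q₂ := lt_of_lt_of_le one_pos hq₂
  calc |deriv^[m] g t| ≤ (M * ((m.factorial : ℝ)) ^ s * (τ/R) ^ m) * Sn := hb1
    _ ≤ (M * ((m.factorial : ℝ)) ^ s * (τ/R) ^ m)
        * (((n.factorial : ℝ)) ^ (s/2) * (2*q₂) ^ n * (1 + A₂)) := by
        apply mul_le_mul_of_nonneg_left hb2 (by positivity)
    _ = M * (1 + A₂) * (((m.factorial : ℝ)) ^ s / (R/τ) ^ m)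
        * (((n.factorial : ℝ)) ^ (s/2) / (1/(2*q₂)) ^ n) := by
        rw [div_pow, div_pow, div_pow, one_pow]
        field_simp
end

section
/- Let τ > 0 and i ≥ 0 be an integer. Then Σ_{n≥0} e^{-τπ²n²} (πn)^{2i} ≤ C (1 + 1/√τ) · i!/τ^i for a universal constant C > 0. -/
/-! Writing `y = τ π² n²`, each term is `τ⁻ⁱ yⁱ e⁻ʸ`. Since `(1 - 1/(2(i+1)))ⁱ ≥ 1/2` (Bernoulli),
keeping the fraction `1/(2(i+1))` of the exponent aside while maximising costs only a factor 2:
`yⁱ e⁻ʸ ≤ 2 (i/e)ⁱ e^{-y/(2(i+1))}`. The remaining Gaussian sum is dominated by a geometric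
series and is `O(1 + √(i+1)/√τ)`, and Stirling's bound `√(2πi) (i/e)ⁱ ≤ i!` absorbs `√(i+1)`. -/

open Real

lemma exp_neg_mul_sq_le_geometric {b : ℝ} (hb : 0 ≤ b) (n : ℕ) :
    exp (-b * n ^ 2) ≤ exp 1 * exp (-(2 * √b)) ^ n := by
  rw [← exp_nat_mul, ← exp_add]
  exact exp_le_exp.2 (by nlinarith [sq_nonneg (√b * n - 1), sq_sqrt hb])

lemma inv_one_sub_exp_neg_le {x : ℝ} (hx : 0 < x) : (1 - exp (-x))⁻¹ ≤ 1 + x⁻¹ := by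
  have h : exp (-x) * (1 + x) ≤ 1 := by
    rw [exp_neg, inv_mul_le_iff₀ (exp_pos x), mul_one, add_comm]
    exact add_one_le_exp x
  have h1 : 0 < 1 - exp (-x) := by linarith [exp_lt_one_iff.2 (neg_lt_zero.2 hx)]
  rw [inv_le_iff_one_le_mul₀ h1]
  field_simp
  nlinarith

lemma summable_exp_neg_mul_sq {b : ℝ} (hb : 0 < b) :
    Summable fun n : ℕ ↦ exp (-b * n ^ 2) :=
  .of_nonneg_of_le (fun _ ↦ (exp_pos _).le) (exp_neg_mul_sq_le_geometric hb.le)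
    ((summable_geometric_of_lt_one (exp_pos _).le
      (exp_lt_one_iff.2 (by have := sqrt_pos.2 hb; linarith))).mul_left _)

lemma tsum_exp_neg_mul_sq_le {b : ℝ} (hb : 0 < b) :
    ∑' n : ℕ, exp (-b * n ^ 2) ≤ exp 1 * (1 + 1 / (2 * √b)) := by
  have hs : 0 < 2 * √b := by positivity
  have hr : exp (-(2 * √b)) < 1 := exp_lt_one_iff.2 (by linarith)
  calc ∑' n : ℕ, exp (-b * n ^ 2)
      ≤ ∑' n : ℕ, exp 1 * exp (-(2 * √b)) ^ n :=
        (summable_exp_neg_mul_sq hb).tsum_le_tsum (exp_neg_mul_sq_le_geometric hb.le)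
          ((summable_geometric_of_lt_one (exp_pos _).le hr).mul_left _)
    _ = exp 1 * (1 - exp (-(2 * √b)))⁻¹ := by
        rw [tsum_mul_left, tsum_geometric_of_lt_one (exp_pos _).le hr]
    _ ≤ exp 1 * (1 + 1 / (2 * √b)) := by
        rw [one_div]
        exact mul_le_mul_of_nonneg_left (inv_one_sub_exp_neg_le hs) (exp_pos 1).le

lemma pow_mul_exp_neg_le (i : ℕ) {y : ℝ} (hy : 0 ≤ y) : y ^ i * exp (-y) ≤ (i / exp 1) ^ i := by
  rcases Nat.eq_zero_or_pos i with rfl | hi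
  · simpa using hy
  have hi' : (0 : ℝ) < i := Nat.cast_pos.2 hi
  have hmax : y * exp (-(y / i)) ≤ i / exp 1 :=
    calc y * exp (-(y / i)) = i * (y / i * exp (-(y / i))) := by field_simp
      _ ≤ i * exp (-1) := mul_le_mul_of_nonneg_left (mul_exp_neg_le_exp_neg_one _) hi'.le
      _ = i / exp 1 := by rw [exp_neg, div_eq_mul_inv]
  calc y ^ i * exp (-y) = (y * exp (-(y / i))) ^ i := by
        rw [mul_pow, ← exp_nat_mul]; field_simp
    _ ≤ (i / exp 1) ^ i := pow_le_pow_left₀ (by positivity) hmax i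

lemma sqrt_succ_mul_div_exp_one_pow_le_factorial (i : ℕ) :
    √(i + 1) * (i / exp 1) ^ i ≤ i.factorial := by
  rcases Nat.eq_zero_or_pos i with rfl | hi
  · simp
  refine le_trans (mul_le_mul_of_nonneg_right ?_ (by positivity)) (Stirling.le_factorial_stirling i)
  have hi' : (1 : ℝ) ≤ i := Nat.one_le_cast.2 hi
  exact sqrt_le_sqrt (by nlinarith [pi_gt_three])

lemma pow_mul_exp_neg_le_mul_exp_neg (i : ℕ) {y : ℝ} (hy : 0 ≤ y) :
    y ^ i * exp (-y) ≤ 2 * (i / exp 1) ^ i * exp (-(y / (2 * (i + 1)))) := by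
  set c : ℝ := 1 - 1 / (2 * (i + 1)) with hc
  have hc0 : 0 < c := by rw [hc]; field_simp; linarith
  have hci : 1 / 2 ≤ c ^ i := by
    refine le_trans ?_ (one_add_mul_sub_le_pow (by linarith) i)
    rw [hc]; field_simp; linarith
  have hsplit : y ^ i * exp (-y) =
      (c * y) ^ i * exp (-(c * y)) / c ^ i * exp (-(y / (2 * (i + 1)))) := by
    have hexp : exp (-y) = exp (-(c * y)) * exp (-(y / (2 * (i + 1)))) := by
      rw [← exp_add, hc]; congr 1; field_simp; ring
    rw [hexp, mul_pow]
    field_simp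
  rw [hsplit]
  gcongr
  calc (c * y) ^ i * exp (-(c * y)) / c ^ i ≤ (i / exp 1) ^ i / (1 / 2) := by
        gcongr
        exact pow_mul_exp_neg_le i (by positivity)
    _ = 2 * (i / exp 1) ^ i := by ring

lemma exp_neg_mul_sq_mul_pow_le {τ : ℝ} (hτ : 0 < τ) (i : ℕ) (x : ℝ) :
    exp (-τ * π ^ 2 * x ^ 2) * (π * x) ^ (2 * i) ≤
      2 * (i / exp 1) ^ i / τ ^ i * exp (-(τ * π ^ 2 / (2 * (i + 1))) * x ^ 2) :=
  calc exp (-τ * π ^ 2 * x ^ 2) * (π * x) ^ (2 * i)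
      = (τ * π ^ 2 * x ^ 2) ^ i * exp (-(τ * π ^ 2 * x ^ 2)) / τ ^ i := by
        rw [pow_mul]; field_simp; ring_nf
    _ ≤ 2 * (i / exp 1) ^ i * exp (-(τ * π ^ 2 * x ^ 2 / (2 * (i + 1)))) / τ ^ i := by
        gcongr ?_ / _
        exact pow_mul_exp_neg_le_mul_exp_neg i (by positivity)
    _ = 2 * (i / exp 1) ^ i / τ ^ i * exp (-(τ * π ^ 2 / (2 * (i + 1))) * x ^ 2) := by
        ring_nf

lemma one_div_two_mul_sqrt_le {τ : ℝ} (hτ : 0 < τ) (i : ℕ) :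
    1 / (2 * √(τ * π ^ 2 / (2 * (i + 1)))) ≤ √(i + 1) / √τ := by
  have hprod : (i + 1) * (τ * π ^ 2 / (2 * (i + 1))) = τ * (π ^ 2 / 2) := by field_simp
  have hpi : 1 ≤ √(π ^ 2 / 2) := one_le_sqrt.2 (by nlinarith [pi_gt_three])
  rw [div_le_div_iff₀ (by positivity) (by positivity), one_mul, mul_left_comm,
    ← sqrt_mul (by positivity), hprod, sqrt_mul hτ.le]
  nlinarith [sqrt_pos.2 hτ]

theorem heat_sum_bound :
    ∃ C : ℝ, 0 < C ∧ ∀ (τ : ℝ), 0 < τ → ∀ i : ℕ,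
      (∑' n : ℕ, Real.exp (-τ * π ^ 2 * (n : ℝ) ^ 2) * (π * (n : ℝ)) ^ (2 * i)) ≤
        C * (1 + 1 / Real.sqrt τ) * (Nat.factorial i : ℝ) / τ ^ i := by
  refine ⟨2 * exp 1, by positivity, fun τ hτ i ↦ ?_⟩
  set b := τ * π ^ 2 / (2 * (i + 1))
  have hb : 0 < b := by positivity
  set M := 2 * (i / exp 1) ^ i / τ ^ i
  have hterm (n : ℕ) : exp (-τ * π ^ 2 * (n : ℝ) ^ 2) * (π * n) ^ (2 * i) ≤ M * exp (-b * n ^ 2) :=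
    exp_neg_mul_sq_mul_pow_le hτ i n
  have hgauss : Summable fun n : ℕ ↦ M * exp (-b * n ^ 2) := (summable_exp_neg_mul_sq hb).mul_left M
  have hstirling := sqrt_succ_mul_div_exp_one_pow_le_factorial i
  have hpow : (i / exp 1) ^ i ≤ i.factorial :=
    (le_mul_of_one_le_left (by positivity) (one_le_sqrt.2 (by simp))).trans hstirling
  calc ∑' n : ℕ, exp (-τ * π ^ 2 * (n : ℝ) ^ 2) * (π * n) ^ (2 * i)
      ≤ ∑' n : ℕ, M * exp (-b * n ^ 2) :=
        (hgauss.of_nonneg_of_le (fun n ↦ by positivity) hterm).tsum_le_tsum hterm hgauss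
    _ = M * ∑' n : ℕ, exp (-b * n ^ 2) := tsum_mul_left
    _ ≤ M * (exp 1 * (1 + √(i + 1) / √τ)) := by
        gcongr
        refine (tsum_exp_neg_mul_sq_le hb).trans ?_
        gcongr exp 1 * (1 + ?_)
        exact one_div_two_mul_sqrt_le hτ i
    _ = 2 * exp 1 * ((i / exp 1) ^ i + √(i + 1) * (i / exp 1) ^ i / √τ) / τ ^ i := by ring
    _ ≤ 2 * exp 1 * (1 + 1 / √τ) * i.factorial / τ ^ i := by
        rw [mul_assoc _ (1 + _), add_mul, one_mul, one_div_mul_eq_div]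
        gcongr
end

section
/- Let (c_n) be bounded, τ > 0, and θ(t,x) := Σ_{n≥0} c_n e^{-n²π²t} √2 cos(nπx). Then for every ε ∈ (0,τ) there exist constants C, δ > 0 such that |∂_t^m ∂_x^n θ(t,x)| ≤ C · m!/δ^m · (n!)^(1/2)/δ^(n/2) for all (t,x) ∈ [ε,τ] × [0,1] and all m, n ≥ 0; i.e. θ is Gevrey of order 1 in t and 1/2 in x on [ε,τ]×[0,1]. -/
/-!
Differentiating the `k`-th mode `m` times in `t` and `n` times in `x` produces the factor
`λ^m · λ^{n/2}` with `λ = k²π²`. The elementary bound `y^j ≤ j!/δ^j · e^{δy}`, applied with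
`j = m` and (under a square root) with `j = n`, trades it for `m!/δ^m · √(n!/δ^n) · e^{3δλ/2}`,
so for `t ≥ ε > 3δ/2` every differentiated series is dominated, uniformly in `t` and `x`, by
`√2 · sup |c_k| · m!/δ^m · √(n!/δ^n) · Σ_k e^{-(ε - 3δ/2)k²π²}`. The same domination justifies
differentiating the series term by term.
-/

open Real

open scoped Nat

namespace NeumannHeat

lemma pow_le_factorial_div_pow_mul_exp {y δ : ℝ} (hy : 0 ≤ y) (hδ : 0 < δ) (j : ℕ) :
    y ^ j ≤ j ! / δ ^ j * exp (δ * y) := by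
  have h := pow_div_factorial_le_exp (δ * y) (mul_nonneg hδ.le hy) j
  rw [div_le_iff₀ (by positivity), mul_pow] at h
  rw [div_mul_eq_mul_div, le_div_iff₀ (by positivity)]
  linarith

lemma pow_le_sqrt_factorial_div_pow_mul_exp {z δ : ℝ} (hz : 0 ≤ z) (hδ : 0 < δ) (j : ℕ) :
    z ^ j ≤ √(j ! / δ ^ j) * exp (δ * z ^ 2 / 2) := by
  rw [exp_half, ← sqrt_mul (by positivity), le_sqrt (by positivity) (by positivity),
    ← pow_mul, mul_comm j 2, pow_mul]
  exact pow_le_factorial_div_pow_mul_exp (sq_nonneg z) hδ j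

lemma sqrt_div_pow_eq_rpow_div_rpow (a : ℝ) {δ : ℝ} (hδ : 0 ≤ δ) (j : ℕ) :
    √(a / δ ^ j) = a ^ (1 / 2 : ℝ) / δ ^ ((j : ℝ) / 2) := by
  rw [sqrt_div' _ (by positivity), sqrt_eq_rpow, sqrt_eq_rpow, ← rpow_natCast δ j,
    ← rpow_mul hδ, mul_one_div]

lemma summable_exp_neg_sq_mul {b : ℝ} (hb : 0 < b) :
    Summable fun k : ℕ => exp (-(k : ℝ) ^ 2 * π ^ 2 * b) := by
  have h := summable_exp_nat_mul_of_ge (c := -(π ^ 2 * b)) (neg_neg_of_pos (by positivity))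
    (f := fun k : ℕ => (k : ℝ) ^ 2) fun k => by exact_mod_cast Nat.le_self_pow two_ne_zero k
  convert h using 3
  ring

/-- `∂ₜᵐ ∂ₓⁿ` of the mode `c k e^{-k²π²t} √2 cos(kπx)`; the phase `n π/2` records
`cos' = cos (· + π/2)`. -/
noncomputable def modeDeriv (c : ℕ → ℝ) (m n k : ℕ) (t x : ℝ) : ℝ :=
  c k * (-((k : ℝ) ^ 2 * π ^ 2)) ^ m * exp (-(k : ℝ) ^ 2 * π ^ 2 * t) * √2 *
    ((k : ℝ) * π) ^ n * cos ((k : ℝ) * π * x + n * (π / 2))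

noncomputable def seriesDeriv (c : ℕ → ℝ) (m n : ℕ) (t x : ℝ) : ℝ :=
  ∑' k, modeDeriv c m n k t x

noncomputable def gevreyWeight (δ : ℝ) (m n : ℕ) : ℝ :=
  m ! / δ ^ m * √(n ! / δ ^ n)

lemma modeDeriv_zero_zero (c : ℕ → ℝ) (k : ℕ) (t x : ℝ) :
    modeDeriv c 0 0 k t x = c k * exp (-(k : ℝ) ^ 2 * π ^ 2 * t) * √2 * cos ((k : ℝ) * π * x) := by
  simp [modeDeriv]

lemma hasDerivAt_modeDeriv_x (c : ℕ → ℝ) (m n k : ℕ) (t x : ℝ) :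
    HasDerivAt (modeDeriv c m n k t) (modeDeriv c m (n + 1) k t x) x := by
  have hphase : HasDerivAt (fun y : ℝ => (k : ℝ) * π * y + n * (π / 2)) ((k : ℝ) * π) x := by
    simpa using ((hasDerivAt_id x).const_mul ((k : ℝ) * π)).add_const ((n : ℝ) * (π / 2))
  refine (hphase.cos.const_mul (c k * (-((k : ℝ) ^ 2 * π ^ 2)) ^ m *
    exp (-(k : ℝ) ^ 2 * π ^ 2 * t) * √2 * ((k : ℝ) * π) ^ n)).congr_deriv ?_
  rw [modeDeriv, Nat.cast_succ, add_one_mul, ← add_assoc, cos_add_pi_div_two]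
  ring

lemma hasDerivAt_modeDeriv_t (c : ℕ → ℝ) (m n k : ℕ) (t x : ℝ) :
    HasDerivAt (modeDeriv c m n k · x) (modeDeriv c (m + 1) n k t x) t := by
  have hrate : HasDerivAt (fun s : ℝ => -(k : ℝ) ^ 2 * π ^ 2 * s) (-(k : ℝ) ^ 2 * π ^ 2) t :=
    ((hasDerivAt_id' t).const_mul _).congr_deriv (mul_one _)
  refine ((((hrate.exp.const_mul (c k * (-((k : ℝ) ^ 2 * π ^ 2)) ^ m)).mul_const √2).mul_const
    (((k : ℝ) * π) ^ n)).mul_const (cos ((k : ℝ) * π * x + n * (π / 2)))).congr_deriv ?_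
  rw [modeDeriv]
  ring

variable {c : ℕ → ℝ}

lemma abs_modeDeriv_le {B : ℝ} (hc : ∀ k, |c k| ≤ B) {δ a t : ℝ} (hδ : 0 < δ) (hat : a ≤ t)
    (m n k : ℕ) (x : ℝ) :
    |modeDeriv c m n k t x| ≤
      B * √2 * gevreyWeight δ m n * exp (-(k : ℝ) ^ 2 * π ^ 2 * (a - 3 * δ / 2)) := by
  obtain ⟨l, hl_def⟩ : ∃ l, l = (k : ℝ) ^ 2 * π ^ 2 := ⟨_, rfl⟩
  have hrate : ∀ s, -(k : ℝ) ^ 2 * π ^ 2 * s = -l * s := fun s => by rw [hl_def]; ring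
  have hl : 0 ≤ l := hl_def ▸ by positivity
  have hB : 0 ≤ B := (abs_nonneg _).trans (hc 0)
  have hdecay : exp (-l * t) ≤ exp (-l * a) := exp_le_exp.2 (by nlinarith)
  have htime := pow_le_factorial_div_pow_mul_exp hl hδ m
  have hspace := pow_le_sqrt_factorial_div_pow_mul_exp (by positivity : 0 ≤ (k : ℝ) * π) hδ n
  rw [mul_pow (k : ℝ) π 2, ← hl_def] at hspace
  rw [modeDeriv, hrate, hrate, ← hl_def]
  calc |c k * (-l) ^ m * exp (-l * t) * √2 * ((k : ℝ) * π) ^ n *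
        cos ((k : ℝ) * π * x + n * (π / 2))|
      = |c k| * l ^ m * exp (-l * t) * √2 * ((k : ℝ) * π) ^ n *
          |cos ((k : ℝ) * π * x + n * (π / 2))| := by
        simp only [abs_mul, abs_pow, abs_neg, abs_of_nonneg hl, abs_exp,
          abs_of_nonneg (sqrt_nonneg 2), abs_of_nonneg (by positivity : 0 ≤ (k : ℝ) * π)]
    _ ≤ B * (m ! / δ ^ m * exp (δ * l)) * exp (-l * a) * √2 *
          (√(n ! / δ ^ n) * exp (δ * l / 2)) * 1 := by
        gcongr
        exacts [hc k, abs_cos_le_one _]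
    _ = B * √2 * gevreyWeight δ m n * (exp (δ * l) * exp (-l * a) * exp (δ * l / 2)) := by
        rw [gevreyWeight]
        ring
    _ = B * √2 * gevreyWeight δ m n * exp (-l * (a - 3 * δ / 2)) := by
        rw [← exp_add, ← exp_add]
        ring_nf

lemma summable_modeDeriv_bound (B : ℝ) {δ a : ℝ} (hδa : 3 * δ / 2 < a) (m n : ℕ) :
    Summable fun k : ℕ =>
      B * √2 * gevreyWeight δ m n * exp (-(k : ℝ) ^ 2 * π ^ 2 * (a - 3 * δ / 2)) :=
  (summable_exp_neg_sq_mul (by linarith)).mul_left _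

lemma summable_modeDeriv {B : ℝ} (hc : ∀ k, |c k| ≤ B) (m n : ℕ) {t : ℝ} (ht : 0 < t)
    (x : ℝ) : Summable (modeDeriv c m n · t x) :=
  .of_norm_bounded (summable_modeDeriv_bound B (a := t) (δ := t / 3) (by linarith) m n)
    fun k => abs_modeDeriv_le hc (by positivity) le_rfl m n k x

lemma hasDerivAt_seriesDeriv_x {B : ℝ} (hc : ∀ k, |c k| ≤ B) (m n : ℕ) {t : ℝ} (ht : 0 < t)
    (x : ℝ) : HasDerivAt (seriesDeriv c m n t) (seriesDeriv c m (n + 1) t x) x :=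
  hasDerivAt_tsum (summable_modeDeriv_bound B (a := t) (δ := t / 3) (by linarith) m (n + 1))
    (fun k y => hasDerivAt_modeDeriv_x c m n k t y)
    (fun k y => abs_modeDeriv_le hc (by positivity) le_rfl m (n + 1) k y)
    (summable_modeDeriv hc m n ht x) x

lemma hasDerivAt_seriesDeriv_t {B : ℝ} (hc : ∀ k, |c k| ≤ B) (m n : ℕ) {t : ℝ} (ht : 0 < t)
    (x : ℝ) : HasDerivAt (seriesDeriv c m n · x) (seriesDeriv c (m + 1) n t x) t := by
  have hmem : t ∈ Set.Ioi (t / 2) := half_lt_self ht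
  exact hasDerivAt_tsum_of_isPreconnected
    (summable_modeDeriv_bound B (a := t / 2) (δ := t / 6) (by linarith) (m + 1) n)
    isOpen_Ioi isPreconnected_Ioi (fun k s _ => hasDerivAt_modeDeriv_t c m n k s x)
    (fun k s hs => abs_modeDeriv_le hc (by positivity) hs.le (m + 1) n k x)
    hmem (summable_modeDeriv hc m n ht x) hmem

lemma iteratedDeriv_seriesDeriv_x {B : ℝ} (hc : ∀ k, |c k| ≤ B) {t : ℝ} (ht : 0 < t) (n : ℕ) :
    iteratedDeriv n (seriesDeriv c 0 0 t) = seriesDeriv c 0 n t := by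
  induction n with
  | zero => exact iteratedDeriv_zero
  | succ n ih =>
    ext x
    rw [iteratedDeriv_succ, ih]
    exact (hasDerivAt_seriesDeriv_x hc 0 n ht x).deriv

lemma iteratedDeriv_eq_seriesDeriv_t {B : ℝ} (hc : ∀ k, |c k| ≤ B) {n : ℕ} {x : ℝ} {f : ℝ → ℝ}
    (hf : ∀ t > 0, f t = seriesDeriv c 0 n t x) (m : ℕ) :
    ∀ t > 0, iteratedDeriv m f t = seriesDeriv c m n t x := by
  induction m with
  | zero => simpa using hf
  | succ m ih =>
    intro t ht
    have hnear : iteratedDeriv m f =ᶠ[nhds t] (seriesDeriv c m n · x) :=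
      Filter.eventually_of_mem (isOpen_Ioi.mem_nhds ht) ih
    rw [iteratedDeriv_succ, hnear.deriv_eq]
    exact (hasDerivAt_seriesDeriv_t hc m n ht x).deriv

lemma abs_seriesDeriv_le {B : ℝ} (hc : ∀ k, |c k| ≤ B) {δ a t : ℝ} (hδ : 0 < δ)
    (hδa : 3 * δ / 2 < a) (hat : a ≤ t) (m n : ℕ) (x : ℝ) :
    |seriesDeriv c m n t x| ≤
      B * √2 * gevreyWeight δ m n * ∑' k : ℕ, exp (-(k : ℝ) ^ 2 * π ^ 2 * (a - 3 * δ / 2)) := by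
  rw [← norm_eq_abs, seriesDeriv]
  exact tsum_of_norm_bounded
    (by simpa only [tsum_mul_left] using (summable_modeDeriv_bound B hδa m n).hasSum)
    fun k => abs_modeDeriv_le hc hδ hat m n k x

end NeumannHeat

open NeumannHeat in
theorem heat_solution_gevrey_regularity_general
    (c : ℕ → ℝ) (B : ℝ) (hc : ∀ n, |c n| ≤ B) (τ ε : ℝ)
    (hε : ε ∈ Set.Ioo 0 τ) (θ : ℝ → ℝ → ℝ)
    (hθ : ∀ t x, θ t x = ∑' n : ℕ, c n * Real.exp (-(n : ℝ) ^ 2 * π ^ 2 * t) *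
      Real.sqrt 2 * Real.cos ((n : ℝ) * π * x)) :
    ∃ C δ : ℝ, 0 < C ∧ 0 < δ ∧
      ∀ m n : ℕ, ∀ t ∈ Set.Icc ε τ, ∀ x ∈ Set.Icc (0 : ℝ) 1,
        |iteratedDeriv m (fun t' => iteratedDeriv n (fun x' => θ t' x') x) t| ≤
          C * ((Nat.factorial m : ℝ) / δ ^ m) *
            ((Nat.factorial n : ℝ) ^ ((1 : ℝ) / 2) / δ ^ ((n : ℝ) / 2)) := by
  obtain ⟨hε, -⟩ := hε
  obtain rfl : θ = seriesDeriv c 0 0 :=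
    funext₂ fun t x => (hθ t x).trans (tsum_congr fun k => (modeDeriv_zero_zero c k t x).symm)
  have hB : 0 ≤ B := (abs_nonneg _).trans (hc 0)
  set δ := ε / 3 with hδ
  set E := ∑' k : ℕ, exp (-(k : ℝ) ^ 2 * π ^ 2 * (ε - 3 * δ / 2))
  have hE : 0 < E :=
    (summable_exp_neg_sq_mul (by linarith)).tsum_pos (fun _ => (exp_pos _).le) 0 (exp_pos _)
  refine ⟨(B + 1) * √2 * E, δ, by positivity, by positivity, fun m n t ht x _ => ?_⟩
  have ht0 : 0 < t := hε.trans_le ht.1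
  rw [iteratedDeriv_eq_seriesDeriv_t hc
    (fun s hs => congrFun (iteratedDeriv_seriesDeriv_x hc hs n) x) m t ht0,
    ← sqrt_div_pow_eq_rpow_div_rpow _ (by positivity)]
  calc |seriesDeriv c m n t x| ≤ B * √2 * gevreyWeight δ m n * E :=
        abs_seriesDeriv_le hc (by positivity) (by linarith) ht.1 m n x
    _ ≤ (B + 1) * √2 * E * (m ! / δ ^ m) * √(n ! / δ ^ n) := by
        rw [gevreyWeight]
        have hweight : 0 ≤ √2 * E * (m ! / δ ^ m) * √(n ! / δ ^ n) := by positivity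
        nlinarith

theorem heat_solution_gevrey_regularity
    (c : ℕ → ℝ) (B : ℝ) (hc : ∀ n, |c n| ≤ B) (τ ε : ℝ) (hτ : 0 < τ)
    (hε : ε ∈ Set.Ioo 0 τ) (θ : ℝ → ℝ → ℝ)
    (hθ : ∀ t x, θ t x = ∑' n : ℕ, c n * Real.exp (-(n : ℝ) ^ 2 * π ^ 2 * t) *
      Real.sqrt 2 * Real.cos ((n : ℝ) * π * x)) :
    ∃ C δ : ℝ, 0 < C ∧ 0 < δ ∧
      ∀ m n : ℕ, ∀ t ∈ Set.Icc ε τ, ∀ x ∈ Set.Icc (0 : ℝ) 1,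
        |iteratedDeriv m (fun t' => iteratedDeriv n (fun x' => θ t' x') x) t| ≤
          C * ((Nat.factorial m : ℝ) / δ ^ m) *
            ((Nat.factorial n : ℝ) ^ ((1 : ℝ) / 2) / δ ^ ((n : ℝ) / 2)) :=
  heat_solution_gevrey_regularity_general c B hc τ ε hε θ hθ
end

section
/- Let τ > 0 and (c_n) be a bounded sequence. Then the function ỹ(t) := √2 Σ_{n≥0} c_n e^{-n²π²t} is real analytic on (0,∞) and satisfies |ỹ^(i)(t)| ≤ √2 sup_n |c_n| · (Σ_{n≥0} e^{-n²π²τ/2}) · i!/(τ/2)^i for all t ≥ τ and all i ≥ 0. -/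
/-!
The series extends to the holomorphic function `z ↦ √2 ∑ cₙ e^{-n²π² z}` on the right
half-plane, where it converges locally uniformly: on `σ ≤ Re z` its terms are dominated by
`B e^{-n²π²σ}`, so there `|ỹ| ≤ √2 B ∑ e^{-n²π²σ}`. For `t ≥ τ` the closed disc of radius
`τ/2` about `t` lies in `τ/2 ≤ Re z`, and Cauchy's estimate on it bounds the `i`-th derivative
by that bound times `i!/(τ/2)^i`. Real derivatives of `ỹ` are real parts of complex ones.
-/

open Real

theorem summable_exp_neg_natCast_sq_mul {a : ℝ} (ha : 0 < a) :
    Summable fun n : ℕ => rexp (-(n : ℝ) ^ 2 * a) := by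
  refine (summable_geometric_of_lt_one (exp_nonneg _)
    (exp_lt_one_iff.2 (neg_neg_of_pos ha))).of_nonneg_of_le (fun n => (exp_pos _).le) fun n => ?_
  rw [← exp_nat_mul]
  have : (n : ℝ) ≤ (n : ℝ) ^ 2 := mod_cast Nat.le_self_pow two_ne_zero n
  exact exp_le_exp.2 (by nlinarith)

theorem norm_mul_cexp_neg_mul_le {a z : ℂ} {m B σ : ℝ} (ha : ‖a‖ ≤ B) (hm : 0 ≤ m)
    (hz : σ ≤ z.re) : ‖a * Complex.exp (-m * z)‖ ≤ B * rexp (-m * σ) := by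
  have hre : (-(m : ℂ) * z).re = -m * z.re := by simp
  rw [norm_mul, Complex.norm_exp, hre]
  exact mul_le_mul ha (exp_le_exp.2 (by nlinarith)) (exp_pos _).le ((norm_nonneg _).trans ha)

noncomputable def dirichletSeries (c : ℕ → ℂ) (μ : ℕ → ℝ) (z : ℂ) : ℂ :=
  ∑' n, c n * Complex.exp (-μ n * z)

section DirichletSeries

variable {c : ℕ → ℂ} {μ : ℕ → ℝ} {B σ : ℝ}

theorem re_dirichletSeries_ofReal (c : ℕ → ℝ) (μ : ℕ → ℝ) (t : ℝ) :
    (dirichletSeries (fun n => c n) μ t).re = ∑' n, c n * rexp (-μ n * t) := by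
  simp only [dirichletSeries, ← Complex.ofReal_neg, ← Complex.ofReal_mul,
    ← Complex.ofReal_exp, ← Complex.ofReal_tsum, Complex.ofReal_re]

theorem norm_dirichletSeries_le (hc : ∀ n, ‖c n‖ ≤ B) (hμ : ∀ n, 0 ≤ μ n)
    (hsum : Summable fun n => rexp (-μ n * σ)) {z : ℂ} (hz : σ ≤ z.re) :
    ‖dirichletSeries c μ z‖ ≤ B * ∑' n, rexp (-μ n * σ) := by
  have hle n := norm_mul_cexp_neg_mul_le (hc n) (hμ n) hz
  rw [← tsum_mul_left]
  exact tsum_of_norm_bounded (hsum.mul_left B).hasSum hle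

theorem differentiableOn_dirichletSeries (hc : ∀ n, ‖c n‖ ≤ B) (hμ : ∀ n, 0 ≤ μ n)
    (hsum : ∀ σ > 0, Summable fun n => rexp (-μ n * σ)) :
    DifferentiableOn ℂ (dirichletSeries c μ) {z | 0 < z.re} := by
  intro z hz
  have hopen : IsOpen {w : ℂ | z.re / 2 < w.re} :=
    isOpen_lt continuous_const Complex.continuous_re
  have hdiff := Complex.differentiableOn_tsum_of_summable_norm ((hsum _ (half_pos hz)).mul_left B)
    (fun n => by fun_prop) hopen fun n w hw => norm_mul_cexp_neg_mul_le (hc n) (hμ n) hw.le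
  have hz' : z ∈ {w : ℂ | z.re / 2 < w.re} := show z.re / 2 < z.re from half_lt_self hz
  exact (hdiff.differentiableAt (hopen.mem_nhds hz')).differentiableWithinAt

theorem norm_iteratedDeriv_dirichletSeries_le (hc : ∀ n, ‖c n‖ ≤ B)
    (hμ : ∀ n, 0 ≤ μ n) (hsum : ∀ σ > 0, Summable fun n => rexp (-μ n * σ)) (hσ : 0 < σ)
    {R : ℝ} (hR : 0 < R) {z : ℂ} (hz : σ + R ≤ z.re) (i : ℕ) :
    ‖iteratedDeriv i (dirichletSeries c μ) z‖ ≤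
      i.factorial * (B * ∑' n, rexp (-μ n * σ)) / R ^ i := by
  have hball : ∀ w ∈ Metric.closedBall z R, σ ≤ w.re := fun w hw => by
    have := (Complex.abs_re_le_norm (w - z)).trans (mem_closedBall_iff_norm.1 hw)
    rw [Complex.sub_re, abs_le] at this
    linarith
  refine Complex.norm_iteratedDeriv_le_of_forall_mem_sphere_norm_le i hR
    ((differentiableOn_dirichletSeries hc hμ hsum).diffContOnCl_ball fun w hw => ?_)
    fun w hw =>
      norm_dirichletSeries_le hc hμ (hsum σ hσ) (hball w (Metric.sphere_subset_closedBall hw))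
  exact hσ.trans_le (hball w hw)

end DirichletSeries

theorem iteratedDeriv_re_comp_ofReal {F : ℂ → ℂ} {U : Set ℂ} (hU : IsOpen U)
    (hF : DifferentiableOn ℂ F U) (i : ℕ) {x : ℝ} (hx : (x : ℂ) ∈ U) :
    iteratedDeriv i (fun y : ℝ => (F y).re) x = (iteratedDeriv i F x).re := by
  induction i generalizing x with
  | zero => simp
  | succ i ih =>
    have hev : iteratedDeriv i (fun y : ℝ => (F y).re) =ᶠ[nhds x]
        fun y : ℝ => (iteratedDeriv i F y).re := by
      filter_upwards [(hU.preimage Complex.continuous_ofReal).mem_nhds hx] with y hy using ih hy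
    have hderiv : HasDerivAt (iteratedDeriv i F) (iteratedDeriv (i + 1) F x) x := by
      rw [iteratedDeriv_succ, iteratedDeriv_eq_iterate]
      exact (((hF.analyticOnNhd hU).iterated_deriv i) x hx).differentiableAt.hasDerivAt
    rw [iteratedDeriv_succ, hev.deriv_eq, hderiv.real_of_complex.deriv]

theorem heat_trace_analytic_and_derivative_bounds
    (τ : ℝ) (hτ : 0 < τ) (c : ℕ → ℝ) (B : ℝ) (hc : ∀ n, |c n| ≤ B)
    (ytilde : ℝ → ℝ)
    (hy : ∀ t, ytilde t = Real.sqrt 2 * ∑' n : ℕ,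
      c n * Real.exp (-(n : ℝ) ^ 2 * π ^ 2 * t)) :
    AnalyticOnNhd ℝ ytilde (Set.Ioi 0) ∧
      ∀ i : ℕ, ∀ t : ℝ, τ ≤ t →
        |iteratedDeriv i ytilde t| ≤
          Real.sqrt 2 * B * (∑' n : ℕ, Real.exp (-(n : ℝ) ^ 2 * π ^ 2 * τ / 2)) *
            (Nat.factorial i : ℝ) / (τ / 2) ^ i := by
  set μ : ℕ → ℝ := fun n => (n : ℝ) ^ 2 * π ^ 2
  set F := dirichletSeries (fun n => ((√2 * c n : ℝ) : ℂ)) μ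
  have hyF : ytilde = fun t : ℝ => (F t).re := by
    funext t
    simp only [hy, F, re_dirichletSeries_ofReal, μ, ← tsum_mul_left, mul_assoc, neg_mul]
  have hcF n : ‖((√2 * c n : ℝ) : ℂ)‖ ≤ √2 * B := by
    rw [Complex.norm_real, norm_mul, Real.norm_of_nonneg (sqrt_nonneg 2), Real.norm_eq_abs]
    exact mul_le_mul_of_nonneg_left (hc n) (sqrt_nonneg 2)
  have hμ n : 0 ≤ μ n := by positivity
  have hsum σ (hσ : 0 < σ) : Summable fun n => rexp (-μ n * σ) := by
    simpa only [μ, neg_mul, mul_assoc] using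
      summable_exp_neg_natCast_sq_mul (by positivity : 0 < π ^ 2 * σ)
  have hU : IsOpen {z : ℂ | 0 < z.re} := isOpen_lt continuous_const Complex.continuous_re
  have hF := differentiableOn_dirichletSeries hcF hμ hsum
  refine ⟨hyF ▸ ((hF.analyticOnNhd hU).mono ?_).re_ofReal, fun i t ht => ?_⟩
  · rintro _ ⟨x, hx, rfl⟩
    exact hx
  have hτt : τ / 2 + τ / 2 ≤ (t : ℂ).re := by simpa using ht
  rw [hyF, iteratedDeriv_re_comp_ofReal hU hF i (by simpa using hτ.trans_le ht)]
  calc _ ≤ ‖iteratedDeriv i F t‖ := Complex.abs_re_le_norm _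
    _ ≤ _ :=
      norm_iteratedDeriv_dirichletSeries_le hcF hμ hsum (half_pos hτ) (half_pos hτ) hτt i
    _ = _ := by
      have hterm n : rexp (-μ n * (τ / 2)) = rexp (-(n : ℝ) ^ 2 * π ^ 2 * τ / 2) :=
        congrArg rexp (by simp only [μ]; ring)
      rw [tsum_congr hterm]
      ring
end

section
/- Let 0 < τ < T and 1 < s < 2, (c_n) bounded, and set y(t) := φ_s((t-τ)/(T-τ)) · √2 Σ_{n≥0} c_n e^{-n²π²t}, where φ_s is a Gevrey-s step function with φ_s(0)=1, φ_s(1)=0 and all derivatives vanishing at 0 and 1. Then y is Gevrey of order s on [τ,T], y^(i)(τ) = √2 Σ_n c_n e^{-n²π²τ}(-n²π²)^i, y^(i)(T) = 0 for all i ≥ 0, and there exist C, R > 0 depending only on τ, T, s with |y^(i)(t)| ≤ C sup_n |c_n| · (i!)^s/R^i for all t ∈ [τ,T]. -/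
open Real

noncomputable def flatExpSum (c : ℕ → ℝ) (j : ℕ) (t : ℝ) : ℝ :=
  ∑' n : ℕ, c n * Real.exp (-(n:ℝ)^2*π^2*t) * (-(n:ℝ)^2*π^2)^j

lemma flat_pow_le_exp (x : ℝ) (hx : 0 ≤ x) (j : ℕ) :
    x ^ j ≤ (j.factorial : ℝ) * Real.exp x := by
  have h := Real.sum_le_exp_of_nonneg hx (j + 1)
  have h2 : x ^ j / (j.factorial : ℝ) ≤ ∑ i ∈ Finset.range (j+1), x ^ i / (i.factorial : ℝ) :=
    Finset.single_le_sum (f := fun i => x ^ i / (i.factorial : ℝ)) (fun i _ => by positivity)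
      (Finset.self_mem_range_succ j)
  have h3 := h2.trans h
  rw [div_le_iff₀ (by positivity)] at h3
  linarith

lemma flat_summable_exp (a : ℝ) (ha : 0 < a) :
    Summable fun n : ℕ => Real.exp (-(n:ℝ)^2*π^2*a) := by
  have hπ : (0:ℝ) < π^2*a := by positivity
  refine Summable.of_nonneg_of_le (fun n => (Real.exp_pos _).le) (fun n => ?_)
    (summable_geometric_of_lt_one (Real.exp_pos (-π^2*a)).le ?_)
  · rw [← Real.exp_nat_mul]
    apply Real.exp_le_exp.2
    have h1 : (n:ℝ) ≤ (n:ℝ)^2 := by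
      have : (n:ℕ) ≤ n^2 := Nat.le_self_pow two_ne_zero n
      exact_mod_cast this
    have h2 : (n:ℝ) * (π^2*a) ≤ (n:ℝ)^2 * (π^2*a) := mul_le_mul_of_nonneg_right h1 hπ.le
    nlinarith
  · exact Real.exp_lt_one_iff.2 (by linarith)

lemma flat_term_bound' (cn B : ℝ) (hc : |cn| ≤ B) (a : ℝ) (ha : 0 < a)
    (j : ℕ) (q t : ℝ) (hq : 0 ≤ q) (hat : a ≤ t) :
    |cn * Real.exp (-q*t) * (-q)^j|
      ≤ B * (j.factorial : ℝ) * (2/a)^j * Real.exp (-q*(a/2)) := by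
  have habs : |cn * Real.exp (-q*t) * (-q)^j| = |cn| * Real.exp (-q*t) * q^j := by
    rw [abs_mul, abs_mul, abs_pow, abs_neg, abs_of_nonneg hq, abs_of_nonneg (Real.exp_pos _).le]
  rw [habs]
  have h1 : Real.exp (-q*t) ≤ Real.exp (-q*a) := Real.exp_le_exp.2 (by nlinarith)
  have h2 : q^j ≤ (j.factorial : ℝ) * (2/a)^j * Real.exp (q*(a/2)) := by
    have hx : (0:ℝ) ≤ q*(a/2) := by positivity
    have h := flat_pow_le_exp (q*(a/2)) hx j
    have heq : q^j = (q*(a/2))^j * (2/a)^j := by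
      rw [← mul_pow]; congr 1; field_simp
    rw [heq]
    calc (q*(a/2))^j * (2/a)^j ≤ ((j.factorial : ℝ) * Real.exp (q*(a/2))) * (2/a)^j :=
          mul_le_mul_of_nonneg_right h (by positivity)
      _ = (j.factorial : ℝ) * (2/a)^j * Real.exp (q*(a/2)) := by ring
  have hB0 : 0 ≤ B := (abs_nonneg _).trans hc
  calc |cn| * Real.exp (-q*t) * q^j
      ≤ B * Real.exp (-q*a) * ((j.factorial : ℝ) * (2/a)^j * Real.exp (q*(a/2))) := by
        apply mul_le_mul (mul_le_mul hc h1 (Real.exp_pos _).le hB0) h2 (by positivity)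
          (by positivity)
    _ = B * (j.factorial : ℝ) * (2/a)^j * (Real.exp (-q*a) * Real.exp (q*(a/2))) := by ring
    _ = B * (j.factorial : ℝ) * (2/a)^j * Real.exp (-q*(a/2)) := by
        rw [← Real.exp_add]; ring_nf

lemma flat_term_bound (c : ℕ → ℝ) (B : ℝ) (hB : ∀ n, |c n| ≤ B) (a : ℝ) (ha : 0 < a)
    (j n : ℕ) (t : ℝ) (hat : a ≤ t) :
    |c n * Real.exp (-(n:ℝ)^2*π^2*t) * (-(n:ℝ)^2*π^2)^j|
      ≤ B * (j.factorial : ℝ) * (2/a)^j * Real.exp (-(n:ℝ)^2*π^2*(a/2)) := by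
  have h := flat_term_bound' (c n) B (hB n) a ha j ((n:ℝ)^2*π^2) t (by positivity) hat
  convert h using 3 <;> ring

lemma flat_summable (c : ℕ → ℝ) (B : ℝ) (hB : ∀ n, |c n| ≤ B) (a : ℝ) (ha : 0 < a)
    (j : ℕ) (t : ℝ) (hat : a ≤ t) :
    Summable (fun n : ℕ => c n * Real.exp (-(n:ℝ)^2*π^2*t) * (-(n:ℝ)^2*π^2)^j) := by
  refine Summable.of_norm_bounded (((flat_summable_exp (a/2) (by linarith)).mul_left
    (B * (j.factorial : ℝ) * (2/a)^j))) (fun n => ?_)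
  rw [Real.norm_eq_abs]
  exact flat_term_bound c B hB a ha j n t hat

lemma flat_hasDerivAt (c : ℕ → ℝ) (B : ℝ) (hB : ∀ n, |c n| ≤ B) (a : ℝ) (ha : 0 < a)
    (j : ℕ) (t : ℝ) (ht : t ∈ Set.Ioi a) :
    HasDerivAt (flatExpSum c j) (flatExpSum c (j+1) t) t := by
  have key : ∀ (n : ℕ) (z : ℝ),
      HasDerivAt (fun z => c n * Real.exp (-(n:ℝ)^2*π^2*z) * (-(n:ℝ)^2*π^2)^j)
        (c n * Real.exp (-(n:ℝ)^2*π^2*z) * (-(n:ℝ)^2*π^2)^(j+1)) z := by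
    intro n z
    have h1 : HasDerivAt (fun z : ℝ => -(n:ℝ)^2*π^2*z) (-(n:ℝ)^2*π^2) z := by
      have h0 := HasDerivAt.const_mul (-(n:ℝ)^2*π^2) (hasDerivAt_id z)
      rwa [mul_one] at h0
    have h2 := ((h1.exp.const_mul (c n)).mul_const ((-(n:ℝ)^2*π^2)^j))
    rw [show (c n * Real.exp (-(n:ℝ)^2*π^2*z) * (-(n:ℝ)^2*π^2)^(j+1)) = c n * (Real.exp (-(n:ℝ)^2*π^2*z) * (-(n:ℝ)^2*π^2)) * (-(n:ℝ)^2*π^2)^j by ring]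
    exact h2
  refine hasDerivAt_tsum_of_isPreconnected
    ((flat_summable_exp (a/2) (by linarith)).mul_left (B * ((j+1).factorial : ℝ) * (2/a)^(j+1)))
    isOpen_Ioi (isPreconnected_Ioi) (fun n y _ => key n y) (fun n y hy => ?_) ht
    (flat_summable c B hB a ha j t (le_of_lt ht)) ht
  rw [Real.norm_eq_abs]
  exact flat_term_bound c B hB a ha (j+1) n y (le_of_lt hy)

lemma flat_tsum_bound (c : ℕ → ℝ) (B : ℝ) (hB : ∀ n, |c n| ≤ B) (a : ℝ) (ha : 0 < a)
    (j : ℕ) (t : ℝ) (hat : a ≤ t) :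
    |flatExpSum c j t| ≤ B * (j.factorial : ℝ) * (2/a)^j *
      ∑' n : ℕ, Real.exp (-(n:ℝ)^2*π^2*(a/2)) := by
  have hs := flat_summable c B hB a ha j t hat
  have hsn : Summable (fun n : ℕ =>
      ‖c n * Real.exp (-(n:ℝ)^2*π^2*t) * (-(n:ℝ)^2*π^2)^j‖) := by
    simp only [Real.norm_eq_abs]
    exact hs.abs
  have h1 : |flatExpSum c j t|
      ≤ ∑' n : ℕ, |c n * Real.exp (-(n:ℝ)^2*π^2*t) * (-(n:ℝ)^2*π^2)^j| := by
    have h0 := norm_tsum_le_tsum_norm hsn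
    simpa only [Real.norm_eq_abs, flatExpSum] using h0
  refine h1.trans ?_
  rw [← tsum_mul_left]
  refine Summable.tsum_le_tsum (fun n => flat_term_bound c B hB a ha j n t hat) hs.abs ?_
  exact (flat_summable_exp (a/2) (by linarith)).mul_left _

lemma flat_pascal (P V : ℕ → ℝ) (i : ℕ) :
    ∑ k ∈ Finset.range (i+1), (i.choose k : ℝ) * (P (k+1) * V (i-k) + P k * V (i-k+1))
      = ∑ k ∈ Finset.range (i+2), ((i+1).choose k : ℝ) * (P k * V (i+1-k)) := by
  have h1 : ∑ k ∈ Finset.range (i+2), ((i+1).choose k : ℝ) * (P k * V (i+1-k))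
      = (∑ k ∈ Finset.range (i+1),
          (((i.choose k : ℝ)) + (i.choose (k+1) : ℝ)) * (P (k+1) * V (i-k)))
        + P 0 * V (i+1) := by
    rw [Finset.sum_range_succ']
    congr 1
    · apply Finset.sum_congr rfl
      intro k _
      rw [Nat.succ_sub_succ, Nat.choose_succ_succ]
      push_cast; ring
    · simp
  have h2 : ∑ k ∈ Finset.range (i+1), (i.choose k : ℝ) * (P k * V (i-k+1))
      = (∑ k ∈ Finset.range (i+1), (i.choose (k+1) : ℝ) * (P (k+1) * V (i-k)))
        + P 0 * V (i+1) := by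
    have h3 : ∑ k ∈ Finset.range (i+2), (i.choose k : ℝ) * (P k * V (i+1-k))
        = (∑ k ∈ Finset.range (i+1), (i.choose (k+1) : ℝ) * (P (k+1) * V (i-k)))
          + P 0 * V (i+1) := by
      rw [Finset.sum_range_succ']
      congr 1
      · apply Finset.sum_congr rfl
        intro k _
        rw [Nat.succ_sub_succ]
      · simp
    have h4 : ∑ k ∈ Finset.range (i+2), (i.choose k : ℝ) * (P k * V (i+1-k))
        = ∑ k ∈ Finset.range (i+1), (i.choose k : ℝ) * (P k * V (i-k+1)) := by
      rw [Finset.sum_range_succ, Nat.choose_succ_self]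
      simp only [Nat.cast_zero, zero_mul, add_zero]
      apply Finset.sum_congr rfl
      intro k hk
      rw [Nat.succ_sub (Nat.lt_succ_iff.mp (Finset.mem_range.mp hk))]
    rw [← h4, h3]
  calc ∑ k ∈ Finset.range (i+1), (i.choose k : ℝ) * (P (k+1) * V (i-k) + P k * V (i-k+1))
      = (∑ k ∈ Finset.range (i+1), (i.choose k : ℝ) * (P (k+1) * V (i-k)))
        + ∑ k ∈ Finset.range (i+1), (i.choose k : ℝ) * (P k * V (i-k+1)) := by
        rw [← Finset.sum_add_distrib]
        exact Finset.sum_congr rfl (fun k _ => by ring)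
    _ = (∑ k ∈ Finset.range (i+1), (i.choose k : ℝ) * (P (k+1) * V (i-k)))
        + ((∑ k ∈ Finset.range (i+1), (i.choose (k+1) : ℝ) * (P (k+1) * V (i-k)))
          + P 0 * V (i+1)) := by rw [h2]
    _ = (∑ k ∈ Finset.range (i+1),
          ((i.choose k : ℝ) + (i.choose (k+1) : ℝ)) * (P (k+1) * V (i-k)))
        + P 0 * V (i+1) := by
        simp only [add_mul]
        rw [Finset.sum_add_distrib]
        ring
    _ = ∑ k ∈ Finset.range (i+2), ((i+1).choose k : ℝ) * (P k * V (i+1-k)) := h1.symm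

lemma flat_leibniz (c : ℕ → ℝ) (B : ℝ) (hB : ∀ n, |c n| ≤ B) (a : ℝ) (ha : 0 < a)
    (ψ : ℝ → ℝ) (hψ : ContDiff ℝ (⊤ : ℕ∞) ψ) (y : ℝ → ℝ)
    (hy : ∀ t, y t = ψ t * (Real.sqrt 2 * flatExpSum c 0 t)) (i : ℕ) :
    ∀ t ∈ Set.Ioi a, iteratedDeriv i y t =
      ∑ k ∈ Finset.range (i+1), (i.choose k : ℝ) *
        (iteratedDeriv k ψ t * (Real.sqrt 2 * flatExpSum c (i - k) t)) := by
  induction i with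
  | zero =>
    intro t ht
    simp [hy t, Finset.sum_range_one]
  | succ i IH =>
    intro t ht
    rw [iteratedDeriv_succ]
    have hEE : iteratedDeriv i y =ᶠ[nhds t] (fun t' => ∑ k ∈ Finset.range (i+1),
        (i.choose k : ℝ) * (iteratedDeriv k ψ t' * (Real.sqrt 2 * flatExpSum c (i - k) t'))) :=
      Filter.eventuallyEq_of_mem (isOpen_Ioi.mem_nhds ht) (fun x hx => IH x hx)
    rw [hEE.deriv_eq]
    have hps : ∀ k : ℕ, HasDerivAt (iteratedDeriv k ψ) (iteratedDeriv (k+1) ψ t) t := by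
      intro k
      rw [iteratedDeriv_succ]
      exact ((hψ.differentiable_iteratedDeriv k (by exact_mod_cast ENat.coe_lt_top k)) t).hasDerivAt
    have hVs : ∀ j : ℕ, HasDerivAt (fun z => Real.sqrt 2 * flatExpSum c j z)
        (Real.sqrt 2 * flatExpSum c (j+1) t) t :=
      fun j => (flat_hasDerivAt c B hB a ha j t ht).const_mul _
    have hterm : ∀ k ∈ Finset.range (i+1),
        HasDerivAt (fun t' => (i.choose k : ℝ) *
            (iteratedDeriv k ψ t' * (Real.sqrt 2 * flatExpSum c (i-k) t')))
          ((i.choose k : ℝ) * (iteratedDeriv (k+1) ψ t * (Real.sqrt 2 * flatExpSum c (i-k) t)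
            + iteratedDeriv k ψ t * (Real.sqrt 2 * flatExpSum c (i-k+1) t))) t := by
      intro k _
      exact ((hps k).mul (hVs (i-k))).const_mul ((i.choose k : ℝ))
    rw [(HasDerivAt.fun_sum hterm).deriv]
    exact flat_pascal (fun k => iteratedDeriv k ψ t) (fun j => Real.sqrt 2 * flatExpSum c j t) i

theorem flat_output_construction
    (τ T s : ℝ) (hτ : 0 < τ) (hτT : τ < T) (hs : 1 < s) (hs2 : s < 2)
    (φ : ℝ → ℝ) (hφsmooth : ContDiff ℝ (⊤ : ℕ∞) φ)
    (hφ0 : φ 0 = 1) (hφ1 : φ 1 = 0)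
    (hφflat : ∀ i : ℕ, 1 ≤ i → iteratedDeriv i φ 0 = 0 ∧ iteratedDeriv i φ 1 = 0)
    (Mφ Rφ : ℝ) (hMφ : 0 < Mφ) (hRφ : 0 < Rφ)
    (hφgevrey : ∀ i : ℕ, ∀ t ∈ Set.Icc (0 : ℝ) 1,
      |iteratedDeriv i φ t| ≤ Mφ * (Nat.factorial i : ℝ) ^ s / Rφ ^ i) :
    ∃ C R : ℝ, 0 < C ∧ 0 < R ∧
      ∀ (c : ℕ → ℝ) (B : ℝ), (∀ n, |c n| ≤ B) →
        ∀ y : ℝ → ℝ,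
          (∀ t, y t = φ ((t - τ) / (T - τ)) *
            (Real.sqrt 2 * ∑' n : ℕ, c n * Real.exp (-(n : ℝ) ^ 2 * π ^ 2 * t))) →
          (∀ i : ℕ, iteratedDeriv i y τ =
              Real.sqrt 2 * ∑' n : ℕ, c n * Real.exp (-(n : ℝ) ^ 2 * π ^ 2 * τ) *
                (-(n : ℝ) ^ 2 * π ^ 2) ^ i) ∧
          (∀ i : ℕ, iteratedDeriv i y T = 0) ∧
          (∀ i : ℕ, ∀ t ∈ Set.Icc τ T,
            |iteratedDeriv i y t| ≤ C * B * (Nat.factorial i : ℝ) ^ s / R ^ i) := by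
  have hδ : 0 < T - τ := sub_pos.2 hτT
  have hKsum : Summable (fun n : ℕ => Real.exp (-(n:ℝ)^2*π^2*(τ/2))) :=
    flat_summable_exp (τ/2) (by linarith)
  set K : ℝ := ∑' n : ℕ, Real.exp (-(n:ℝ)^2*π^2*(τ/2)) with hKdef
  have hK0 : 0 < K := Summable.tsum_pos hKsum (fun n => (Real.exp_pos _).le) 0 (Real.exp_pos _)
  refine ⟨Mφ * Real.sqrt 2 * K, (1/(Rφ*(T-τ)) + 2/τ)⁻¹, by positivity, by positivity, ?_⟩
  intro c B hB y hy
  have hB0 : 0 ≤ B := (abs_nonneg _).trans (hB 0)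
  have hψs : ContDiff ℝ (⊤ : ℕ∞) (fun t : ℝ => φ ((t - τ)/(T - τ))) :=
    hφsmooth.comp ((contDiff_id.sub contDiff_const).div_const _)
  have hψk : ∀ (k : ℕ) (t : ℝ), iteratedDeriv k (fun t => φ ((t - τ)/(T - τ))) t
      = ((T-τ)⁻¹)^k * iteratedDeriv k φ ((t - τ)/(T - τ)) := by
    intro k t
    have e1 : (fun t => φ ((t - τ)/(T - τ))) = fun z => φ ((T-τ)⁻¹ * (z + -τ)) := by
      funext z; congr 1; rw [div_eq_inv_mul]; ring
    rw [e1]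
    rw [congrFun (iteratedDeriv_comp_add_const k (fun x => φ ((T-τ)⁻¹ * x)) (-τ)) t]
    rw [congrFun (iteratedDeriv_comp_const_mul (n := k) (hφsmooth.of_le (by exact_mod_cast le_top)) ((T-τ)⁻¹)) (t + -τ)]
    congr 1
    rw [div_eq_inv_mul]; ring
  have hy' : ∀ t, y t = (fun t => φ ((t - τ)/(T - τ))) t * (Real.sqrt 2 * flatExpSum c 0 t) := by
    intro t
    rw [hy t]
    congr 1
    unfold flatExpSum
    simp only [pow_zero, mul_one]
  have hmain := flat_leibniz c B hB (τ/2) (by linarith) _ hψs y hy'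
  have hτmem : τ ∈ Set.Ioi (τ/2) := by simp only [Set.mem_Ioi]; linarith
  have hTmem : T ∈ Set.Ioi (τ/2) := by simp only [Set.mem_Ioi]; linarith
  refine ⟨?_, ?_, ?_⟩
  · -- value at τ
    intro i
    rw [hmain i τ hτmem]
    have h0 : ((τ - τ)/(T - τ)) = 0 := by rw [sub_self, zero_div]
    rw [Finset.sum_eq_single 0 ?_ ?_]
    · simp only [Nat.choose_zero_right, Nat.cast_one, one_mul, Nat.sub_zero, iteratedDeriv_zero]
      rw [h0, hφ0, one_mul]
      unfold flatExpSum
      rfl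
    · intro b _ hb
      rw [hψk b τ, h0, (hφflat b (Nat.one_le_iff_ne_zero.2 hb)).1]
      ring
    · intro h
      exact absurd (Finset.mem_range.2 (Nat.succ_pos i)) h
  · -- value at T
    intro i
    rw [hmain i T hTmem]
    apply Finset.sum_eq_zero
    intro k _
    have h1 : ((T - τ)/(T - τ)) = 1 := div_self hδ.ne'
    rw [hψk k T, h1]
    rcases Nat.eq_zero_or_pos k with hk | hk
    · subst hk
      simp [hφ1]
    · rw [(hφflat k hk).2]
      ring
  · -- Gevrey bound
    intro i t htt
    obtain ⟨ht1, ht2⟩ := htt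
    have htI : t ∈ Set.Ioi (τ/2) := by simp only [Set.mem_Ioi]; linarith
    rw [hmain i t htI]
    have hLt : (t - τ)/(T - τ) ∈ Set.Icc (0:ℝ) 1 :=
      ⟨div_nonneg (by linarith) hδ.le, (div_le_one hδ).2 (by linarith)⟩
    have hXnn : (0:ℝ) ≤ Mφ * Real.sqrt 2 * K * B :=
      mul_nonneg (mul_nonneg (mul_nonneg hMφ.le (Real.sqrt_nonneg 2)) hK0.le) hB0
    have hfact : ∀ k, k ≤ i → ((k.factorial : ℝ))^s * ((i-k).factorial : ℝ)
        ≤ ((i.factorial : ℝ))^s := by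
      intro k hk
      have h1 : (1:ℝ) ≤ ((i-k).factorial : ℝ) := by exact_mod_cast (i-k).factorial_pos
      have hf1 : ((i-k).factorial : ℝ) ≤ ((i-k).factorial : ℝ)^s := by
        calc ((i-k).factorial : ℝ) = ((i-k).factorial : ℝ)^(1:ℝ) := (Real.rpow_one _).symm
          _ ≤ ((i-k).factorial : ℝ)^s := Real.rpow_le_rpow_of_exponent_le h1 hs.le
      have hf2 : ((k.factorial : ℝ))^s * ((i-k).factorial : ℝ)^s
          = (((k.factorial * (i-k).factorial : ℕ)) : ℝ)^s := by
        push_cast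
        rw [← Real.mul_rpow (by positivity) (by positivity)]
      have hf3 : (k.factorial * (i-k).factorial : ℕ) ≤ i.factorial :=
        Nat.le_of_dvd i.factorial_pos (Nat.factorial_mul_factorial_dvd_factorial hk)
      calc ((k.factorial : ℝ))^s * ((i-k).factorial : ℝ)
          ≤ ((k.factorial : ℝ))^s * ((i-k).factorial : ℝ)^s :=
            mul_le_mul_of_nonneg_left hf1 (by positivity)
        _ = (((k.factorial * (i-k).factorial : ℕ)) : ℝ)^s := hf2
        _ ≤ ((i.factorial : ℝ))^s := by
            apply Real.rpow_le_rpow (by positivity) (by exact_mod_cast hf3) (by linarith)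
    have hterm : ∀ k ∈ Finset.range (i+1),
        |(i.choose k : ℝ) * (iteratedDeriv k (fun t => φ ((t - τ)/(T - τ))) t *
            (Real.sqrt 2 * flatExpSum c (i-k) t))|
          ≤ (Mφ * Real.sqrt 2 * K * B * (i.factorial : ℝ)^s) *
            ((i.choose k : ℝ) * (1/(Rφ*(T-τ)))^k * (2/τ)^(i-k)) := by
      intro k hk
      have hk' : k ≤ i := Nat.lt_succ_iff.mp (Finset.mem_range.mp hk)
      have hP : |iteratedDeriv k (fun t => φ ((t - τ)/(T - τ))) t|
          ≤ ((T-τ)⁻¹)^k * (Mφ * (k.factorial : ℝ)^s / Rφ^k) := by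
        rw [hψk k t, abs_mul, abs_of_nonneg (by positivity : (0:ℝ) ≤ ((T-τ)⁻¹)^k)]
        exact mul_le_mul_of_nonneg_left (hφgevrey k _ hLt) (by positivity)
      have hE : |flatExpSum c (i-k) t| ≤ B * (((i-k).factorial : ℝ)) * (2/τ)^(i-k) * K :=
        flat_tsum_bound c B hB τ hτ (i-k) t ht1
      calc |(i.choose k : ℝ) * (iteratedDeriv k (fun t => φ ((t - τ)/(T - τ))) t *
              (Real.sqrt 2 * flatExpSum c (i-k) t))|
          = ((i.choose k : ℝ) * |iteratedDeriv k (fun t => φ ((t - τ)/(T - τ))) t|) *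
              (Real.sqrt 2 * |flatExpSum c (i-k) t|) := by
            rw [abs_mul, abs_mul, abs_mul, abs_of_nonneg (by positivity : (0:ℝ) ≤ (i.choose k : ℝ)),
              abs_of_nonneg (Real.sqrt_nonneg 2)]
            ring
        _ ≤ ((i.choose k : ℝ) * (((T-τ)⁻¹)^k * (Mφ * (k.factorial : ℝ)^s / Rφ^k))) *
              (Real.sqrt 2 * (B * (((i-k).factorial : ℝ)) * (2/τ)^(i-k) * K)) := by
            apply mul_le_mul
            · exact mul_le_mul_of_nonneg_left hP (by positivity)
            · exact mul_le_mul_of_nonneg_left hE (Real.sqrt_nonneg 2)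
            · positivity
            · positivity
        _ = (Mφ * Real.sqrt 2 * K * B) * ((k.factorial : ℝ)^s * (((i-k).factorial : ℝ))) *
              ((i.choose k : ℝ) * (1/(Rφ*(T-τ)))^k * (2/τ)^(i-k)) := by
            field_simp
            rw [div_pow, div_pow, one_pow, mul_pow]
            field_simp
        _ ≤ (Mφ * Real.sqrt 2 * K * B) * ((i.factorial : ℝ)^s) *
              ((i.choose k : ℝ) * (1/(Rφ*(T-τ)))^k * (2/τ)^(i-k)) := by
            apply mul_le_mul_of_nonneg_right (mul_le_mul_of_nonneg_left (hfact k hk') hXnn)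
            positivity
        _ = (Mφ * Real.sqrt 2 * K * B * (i.factorial : ℝ)^s) *
              ((i.choose k : ℝ) * (1/(Rφ*(T-τ)))^k * (2/τ)^(i-k)) := by ring
    calc |∑ k ∈ Finset.range (i+1), (i.choose k : ℝ) *
            (iteratedDeriv k (fun t => φ ((t - τ)/(T - τ))) t *
              (Real.sqrt 2 * flatExpSum c (i-k) t))|
        ≤ ∑ k ∈ Finset.range (i+1), |(i.choose k : ℝ) *
            (iteratedDeriv k (fun t => φ ((t - τ)/(T - τ))) t *
              (Real.sqrt 2 * flatExpSum c (i-k) t))| := Finset.abs_sum_le_sum_abs _ _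
      _ ≤ ∑ k ∈ Finset.range (i+1), (Mφ * Real.sqrt 2 * K * B * (i.factorial : ℝ)^s) *
            ((i.choose k : ℝ) * (1/(Rφ*(T-τ)))^k * (2/τ)^(i-k)) := Finset.sum_le_sum hterm
      _ = (Mφ * Real.sqrt 2 * K * B * (i.factorial : ℝ)^s) *
            ∑ k ∈ Finset.range (i+1), (1/(Rφ*(T-τ)))^k * (2/τ)^(i-k) * (i.choose k : ℝ) := by
          rw [← Finset.mul_sum]
          congr 1
          exact Finset.sum_congr rfl (fun k _ => by ring)
      _ = (Mφ * Real.sqrt 2 * K * B * (i.factorial : ℝ)^s) * (1/(Rφ*(T-τ)) + 2/τ)^i := by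
          rw [add_pow]
      _ = Mφ * Real.sqrt 2 * K * B * (Nat.factorial i : ℝ)^s /
            ((1/(Rφ*(T-τ)) + 2/τ)⁻¹)^i := by
          rw [inv_pow]
          conv_rhs => rw [div_eq_mul_inv, inv_inv]
end

section
/- Let s ∈ (1,2) and R > 0. Then the series Σ_{i≥0} (i!)^s / ((2i)! R^i) converges, and for every C₃ < 2 - s there is a constant C = C(s, R, C₃) such that Σ_{i > I} (i!)^s/((2i)! R^i) ≤ C e^{-C₃ I ln I} for all integers I ≥ 2. -/
open Real

/-- Key elementary inequality: `x (a - ε log x) ≤ ε e^{a/ε - 1}` for `x > 0`. -/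
lemma flat_key1 (ε a x : ℝ) (hε : 0 < ε) (hx : 0 < x) :
    x * (a - ε * Real.log x) ≤ ε * Real.exp (a / ε - 1) := by
  set u : ℝ := a / ε - 1 - Real.log x with hu
  have h1 : x * Real.exp u = Real.exp (a / ε - 1) := by
    calc x * Real.exp u = Real.exp (Real.log x) * Real.exp u := by rw [Real.exp_log hx]
    _ = Real.exp (Real.log x + u) := (Real.exp_add _ _).symm
    _ = Real.exp (a / ε - 1) := by rw [hu]; ring_nf
  have h2 : u + 1 ≤ Real.exp u := Real.add_one_le_exp u
  have h3 : a - ε * Real.log x = ε * (u + 1) := by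
    rw [hu]; field_simp; ring
  rw [h3, ← h1]
  have h4 := mul_le_mul_of_nonneg_left h2 hx.le
  calc x * (ε * (u + 1)) = ε * (x * (u + 1)) := by ring
  _ ≤ ε * (x * Real.exp u) := mul_le_mul_of_nonneg_left h4 hε.le

/-- Per-term bound via `n! ≤ n^n` and `(2n)! ≥ n! · n^n`. -/
lemma flat_key2 (s R : ℝ) (hs : 1 ≤ s) (hR : 0 < R) (n : ℕ) (hn : 1 ≤ n) :
    (Nat.factorial n : ℝ) ^ s / ((Nat.factorial (2 * n) : ℝ) * R ^ n) ≤
      Real.exp ((s - 2) * n * Real.log n - n * Real.log R) := by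
  have hn0 : (0:ℝ) < n := by exact_mod_cast hn
  have hF : (0:ℝ) < (Nat.factorial n : ℝ) := by exact_mod_cast Nat.factorial_pos n
  have hRn : (0:ℝ) < R ^ n := pow_pos hR n
  have hnn : (0:ℝ) < (n:ℝ) ^ n := pow_pos hn0 n
  have h1 : (Nat.factorial n : ℝ) * (n:ℝ) ^ n ≤ (Nat.factorial (2 * n) : ℝ) := by
    have : Nat.factorial n * n ^ n ≤ Nat.factorial (2 * n) := by
      calc Nat.factorial n * n ^ n ≤ Nat.factorial n * (n + 1) ^ n :=
        Nat.mul_le_mul_left _ (Nat.pow_le_pow_left (Nat.le_succ n) n)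
      _ ≤ Nat.factorial (n + n) := Nat.factorial_mul_pow_le_factorial
      _ = Nat.factorial (2 * n) := by ring_nf
    exact_mod_cast this
  have hFs : (0:ℝ) ≤ (Nat.factorial n : ℝ) ^ s := Real.rpow_nonneg hF.le s
  have step1 : (Nat.factorial n : ℝ) ^ s / ((Nat.factorial (2 * n) : ℝ) * R ^ n) ≤
      (Nat.factorial n : ℝ) ^ s / (((Nat.factorial n : ℝ) * (n:ℝ) ^ n) * R ^ n) := by
    gcongr
  have hsplit : (Nat.factorial n : ℝ) ^ s =
      (Nat.factorial n : ℝ) * (Nat.factorial n : ℝ) ^ (s - 1) := by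
    rw [show s = 1 + (s - 1) by ring, Real.rpow_add hF, Real.rpow_one]
    ring_nf
  have step2 : (Nat.factorial n : ℝ) ^ s / (((Nat.factorial n : ℝ) * (n:ℝ) ^ n) * R ^ n) =
      (Nat.factorial n : ℝ) ^ (s - 1) / ((n:ℝ) ^ n * R ^ n) := by
    rw [hsplit, mul_assoc]
    exact mul_div_mul_left _ _ (ne_of_gt hF)
  have step3 : (Nat.factorial n : ℝ) ^ (s - 1) ≤ ((n:ℝ) ^ n) ^ (s - 1) := by
    apply Real.rpow_le_rpow hF.le _ (by linarith)
    exact_mod_cast Nat.factorial_le_pow n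
  have hsplit2 : ((n:ℝ) ^ n) ^ (s - 1) = (n:ℝ) ^ n * ((n:ℝ) ^ n) ^ (s - 2) := by
    rw [show s - 1 = 1 + (s - 2) by ring, Real.rpow_add hnn, Real.rpow_one]
  have step4 : ((n:ℝ) ^ n) ^ (s - 1) / ((n:ℝ) ^ n * R ^ n) =
      ((n:ℝ) ^ n) ^ (s - 2) / R ^ n := by
    rw [hsplit2]
    exact mul_div_mul_left _ _ (ne_of_gt hnn)
  have step5 : ((n:ℝ) ^ n) ^ (s - 2) / R ^ n =
      Real.exp ((s - 2) * n * Real.log n - n * Real.log R) := by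
    rw [Real.rpow_def_of_pos hnn, Real.log_pow]
    have hRn' : R ^ n = Real.exp ((n:ℝ) * Real.log R) := by
      rw [Real.exp_nat_mul, Real.exp_log hR]
    rw [hRn', ← Real.exp_sub]
    ring_nf
  calc (Nat.factorial n : ℝ) ^ s / ((Nat.factorial (2 * n) : ℝ) * R ^ n)
      ≤ (Nat.factorial n : ℝ) ^ s / (((Nat.factorial n : ℝ) * (n:ℝ) ^ n) * R ^ n) := step1
    _ = (Nat.factorial n : ℝ) ^ (s - 1) / ((n:ℝ) ^ n * R ^ n) := step2
    _ ≤ ((n:ℝ) ^ n) ^ (s - 1) / ((n:ℝ) ^ n * R ^ n) := by gcongr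
    _ = ((n:ℝ) ^ n) ^ (s - 2) / R ^ n := step4
    _ = Real.exp ((s - 2) * n * Real.log n - n * Real.log R) := step5

theorem flatness_series_tail_bound (s R : ℝ) (hs : 1 < s) (hs2 : s < 2) (hR : 0 < R) :
    Summable (fun i : ℕ =>
      (Nat.factorial i : ℝ) ^ s / ((Nat.factorial (2 * i) : ℝ) * R ^ i)) ∧
    ∀ C₃ : ℝ, C₃ < 2 - s →
      ∃ C : ℝ, 0 < C ∧ ∀ I : ℕ, 2 ≤ I →
        (∑' i : ℕ, (Nat.factorial (i + I + 1) : ℝ) ^ s /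
            ((Nat.factorial (2 * (i + I + 1)) : ℝ) * R ^ (i + I + 1))) ≤
          C * Real.exp (-C₃ * (I : ℝ) * Real.log I) := by
  set f : ℕ → ℝ := fun i =>
    (Nat.factorial i : ℝ) ^ s / ((Nat.factorial (2 * i) : ℝ) * R ^ i) with hf
  have hfnonneg : ∀ i, 0 ≤ f i := by
    intro i
    apply div_nonneg (Real.rpow_nonneg (by positivity) s)
    positivity
  -- general per-term exponential bound
  have keyD : ∀ D : ℝ, 0 ≤ D → D < 2 - s →
      ∀ n : ℕ, 1 ≤ n →
        f n ≤ Real.exp (-(D * n * Real.log n) +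
          (2 - s - D) * Real.exp ((1 - Real.log R) / (2 - s - D) - 1) - n) := by
    intro D hD0 hD n hn
    set ε : ℝ := 2 - s - D with hε
    have hεpos : 0 < ε := by rw [hε]; linarith
    set M : ℝ := ε * Real.exp ((1 - Real.log R) / ε - 1) with hM
    have hn0 : (0:ℝ) < n := by exact_mod_cast hn
    have hkey := flat_key1 ε (1 - Real.log R) n hεpos hn0
    have hbound := flat_key2 s R hs.le hR n hn
    have hexp : (s - 2) * n * Real.log n - n * Real.log R ≤
        -(D * n * Real.log n) + M - n := by
      have : (n:ℝ) * ((1 - Real.log R) - ε * Real.log n) ≤ M := hkey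
      nlinarith [this]
    exact hbound.trans (Real.exp_le_exp.mpr hexp)
  have hr0 : (0:ℝ) ≤ Real.exp (-1) := (Real.exp_pos _).le
  have hr1 : Real.exp (-1) < 1 := Real.exp_lt_one_iff.mpr (by norm_num)
  -- Summability
  have hsum : Summable f := by
    rw [← summable_nat_add_iff 1]
    set M₀ : ℝ := (2 - s - 0) * Real.exp ((1 - Real.log R) / (2 - s - 0) - 1) with hM₀
    refine Summable.of_nonneg_of_le (g := fun n => f (n + 1))
      (f := fun n => Real.exp M₀ * Real.exp (-1) ^ n)
      (fun n => hfnonneg _) ?_ ?_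
    · intro n
      have h := keyD 0 le_rfl (by linarith) (n + 1) (Nat.le_add_left 1 n)
      have heq : ∀ m : ℕ, Real.exp (-(0 * (m:ℝ) * Real.log m) + M₀ - m) =
          Real.exp M₀ * Real.exp (-1) ^ m := by
        intro m
        rw [← Real.exp_nat_mul, ← Real.exp_add]
        congr 1
        ring
      rw [heq (n + 1)] at h
      refine h.trans ?_
      exact mul_le_mul_of_nonneg_left
        (pow_le_pow_of_le_one hr0 hr1.le (Nat.le_succ n)) (Real.exp_pos _).le
    · exact (summable_geometric_of_lt_one hr0 hr1).mul_left _
  refine ⟨hsum, ?_⟩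
  intro C₃ hC₃
  set D : ℝ := max C₃ ((2 - s) / 2) with hD
  have hD0 : 0 < D := lt_of_lt_of_le (by linarith) (le_max_right _ _)
  have hDlt : D < 2 - s := max_lt hC₃ (by linarith)
  have hC₃D : C₃ ≤ D := le_max_left _ _
  set M : ℝ := (2 - s - D) * Real.exp ((1 - Real.log R) / (2 - s - D) - 1) with hM
  have hCpos : 0 < Real.exp M * (1 - Real.exp (-1))⁻¹ :=
    mul_pos (Real.exp_pos _) (inv_pos.mpr (by linarith))
  refine ⟨Real.exp M * (1 - Real.exp (-1))⁻¹, hCpos, ?_⟩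
  intro I hI
  have hI1 : (1:ℝ) ≤ (I:ℝ) := by exact_mod_cast hI.trans' (by norm_num)
  have hlogI : 0 ≤ Real.log I := Real.log_nonneg hI1
  -- per-term bound for the tail
  have hterm : ∀ i : ℕ, f (i + I + 1) ≤
      (Real.exp M * Real.exp (-(D * I * Real.log I))) * Real.exp (-1) ^ i := by
    intro i
    have hn : 1 ≤ i + I + 1 := Nat.le_add_left 1 _
    have h := keyD D hD0.le hDlt (i + I + 1) hn
    refine h.trans ?_
    have hcast : ((i + I + 1 : ℕ) : ℝ) = (i:ℝ) + I + 1 := by push_cast; ring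
    rw [hcast]
    have hmono : D * I * Real.log I ≤ D * ((i:ℝ) + I + 1) * Real.log ((i:ℝ) + I + 1) := by
      have hle : (I:ℝ) ≤ (i:ℝ) + I + 1 := by
        have : (0:ℝ) ≤ (i:ℝ) := Nat.cast_nonneg i
        linarith
      have hlog : Real.log I ≤ Real.log ((i:ℝ) + I + 1) :=
        Real.log_le_log (by linarith) hle
      have hlog2 : 0 ≤ Real.log ((i:ℝ) + I + 1) := hlogI.trans hlog
      have := mul_le_mul hle hlog hlogI (by linarith)
      nlinarith [hD0.le]
    have hrhs : (Real.exp M * Real.exp (-(D * I * Real.log I))) * Real.exp (-1) ^ i =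
        Real.exp (-(D * I * Real.log I) + M - i) := by
      rw [← Real.exp_nat_mul, ← Real.exp_add, ← Real.exp_add]
      ring_nf
    rw [hrhs]
    apply Real.exp_le_exp.mpr
    have : (i:ℝ) ≤ (i:ℝ) + I + 1 := by
      have : (0:ℝ) ≤ (I:ℝ) := Nat.cast_nonneg I
      linarith
    linarith [hmono]
  -- sum up
  have hsumtail : Summable (fun i => f (i + I + 1)) := by
    have := (summable_nat_add_iff (I + 1)).mpr hsum
    exact this
  have hsumg : Summable (fun i : ℕ =>
      (Real.exp M * Real.exp (-(D * I * Real.log I))) * Real.exp (-1) ^ i) :=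
    (summable_geometric_of_lt_one hr0 hr1).mul_left _
  have htsum : (∑' i : ℕ, f (i + I + 1)) ≤
      (Real.exp M * Real.exp (-(D * I * Real.log I))) * (1 - Real.exp (-1))⁻¹ := by
    calc (∑' i : ℕ, f (i + I + 1)) ≤ ∑' i : ℕ,
        (Real.exp M * Real.exp (-(D * I * Real.log I))) * Real.exp (-1) ^ i :=
      Summable.tsum_le_tsum hterm hsumtail hsumg
    _ = (Real.exp M * Real.exp (-(D * I * Real.log I))) * (1 - Real.exp (-1))⁻¹ := by
      rw [tsum_mul_left, tsum_geometric_of_lt_one hr0 hr1]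
  refine htsum.trans ?_
  have hfinal : Real.exp (-(D * I * Real.log I)) ≤ Real.exp (-C₃ * I * Real.log I) := by
    apply Real.exp_le_exp.mpr
    have hIlog : 0 ≤ (I:ℝ) * Real.log I := mul_nonneg (by linarith) hlogI
    nlinarith [hC₃D, hIlog]
  calc Real.exp M * Real.exp (-(D * I * Real.log I)) * (1 - Real.exp (-1))⁻¹
      = (Real.exp M * (1 - Real.exp (-1))⁻¹) * Real.exp (-(D * I * Real.log I)) := by ring
    _ ≤ (Real.exp M * (1 - Real.exp (-1))⁻¹) * Real.exp (-C₃ * I * Real.log I) :=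
        mul_le_mul_of_nonneg_left hfinal hCpos.le
end
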